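/- arXiv:1108.5645 — 4 statements merged into one kernel-verified Lean document; each statement's English description precedes it below -/
import Mathlib

section
/- Let X be a coherent configuration on Ω, let e ∈ S^∪ be an equivalence relation on its support, and let I be a subset of the set Ω/e of classes of e. Suppose that no class of e belonging to I has the same cardinality as a class of e not belonging to I. Then the union of all classes in I is a union of fibers of X. -/
open Set

/-- The diagonal relation `1_Γ` on a subset `Γ` of `Ω`. -/
def diagOn {Ω : Type*} (Γ : Set Ω) : Set (Ω × Ω) := {p | p.1 ∈ Γ ∧ p.1 = p.2}

/-- The full diagonal relation `1_Ω`. -/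
def diagSet (Ω : Type*) : Set (Ω × Ω) := {p | p.1 = p.2}

/-- A coherent configuration on `Ω`: a partition `S` of `Ω × Ω` (into nonempty classes,
the *basic relations*) such that the diagonal is a union of classes, the transpose of a
basic relation is a basic relation, and the intersection numbers are well defined. -/
structure CohCfg (Ω : Type*) where
  S : Set (Set (Ω × Ω))
  nonempty_of_mem : ∀ r ∈ S, r.Nonempty
  exists_unique_mem : ∀ p : Ω × Ω, ∃! r : Set (Ω × Ω), r ∈ S ∧ p ∈ r
  diag_of_mem : ∀ r ∈ S, ∀ p ∈ r, p.1 = p.2 → ∀ q ∈ r, q.1 = q.2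
  swap_mem : ∀ r ∈ S, Prod.swap '' r ∈ S
  card_indep : ∀ r ∈ S, ∀ s ∈ S, ∀ t ∈ S, ∀ p ∈ t, ∀ q ∈ t,
    Nat.card {γ : Ω // (p.1, γ) ∈ r ∧ (γ, p.2) ∈ s} =
    Nat.card {γ : Ω // (q.1, γ) ∈ r ∧ (γ, q.2) ∈ s}

namespace CohCfg

variable {Ω : Type*}

/-- The relations of `X`: the elements of `S^∪`, i.e. unions of basic relations. -/
def rel (X : CohCfg Ω) (u : Set (Ω × Ω)) : Prop := ∃ T ⊆ X.S, u = ⋃₀ T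

/-- `Γ` is a fiber of `X`, i.e. `1_Γ` is a basic relation. -/
def fiber (X : CohCfg Ω) (Γ : Set Ω) : Prop := diagOn Γ ∈ X.S

/-- `X'` is a fission of `X` : every relation of `X` is a relation of `X'`. -/
def IsFission (X X' : CohCfg Ω) : Prop := ∀ u : Set (Ω × Ω), X.rel u → X'.rel u

/-- `X` is the complete coherent configuration: all singletons are basic relations. -/
def Complete (X : CohCfg Ω) : Prop := ∀ p : Ω × Ω, {p} ∈ X.S

/-- `Γ` is a union of fibers of `X`. -/
def unionFibers (X : CohCfg Ω) (Γ : Set Ω) : Prop :=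
  ∃ F ⊆ {Δ : Set Ω | X.fiber Δ}, Γ = ⋃₀ F

/-- `Δ` is a base of `X`: every fission of `X` in which all points of `Δ` are fibers is
complete. -/
def IsBase (X : CohCfg Ω) (Δ : Set Ω) : Prop :=
  ∀ X' : CohCfg Ω, X.IsFission X' → (∀ δ ∈ Δ, X'.fiber {δ}) → X'.Complete

/-- `P` is a generalized base of `X`: every fission of `X` in which each member of `P` is a
union of fibers is complete. -/
def IsGenBase (X : CohCfg Ω) (P : Set (Set Ω)) : Prop :=
  ∀ X' : CohCfg Ω, X.IsFission X' → (∀ Γ ∈ P, X'.unionFibers Γ) → X'.Complete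

/-- The base number `b(X)`. -/
noncomputable def bNum (X : CohCfg Ω) : ℕ :=
  sInf {n | ∃ Δ : Set Ω, Δ.ncard = n ∧ X.IsBase Δ}

/-- The generalized base number `gb(X)`. -/
noncomputable def gbNum (X : CohCfg Ω) : ℕ :=
  sInf {n | ∃ P : Set (Set Ω), P.ncard = n ∧ X.IsGenBase P}

/-- `X` is antisymmetric: every symmetric basic relation is contained in the diagonal. -/
def Antisym (X : CohCfg Ω) : Prop :=
  ∀ r ∈ X.S, Prod.swap '' r = r → ∀ p ∈ r, p.1 = p.2

/-- `X` is a scheme (homogeneous): the diagonal is a basic relation. -/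
def IsScheme (X : CohCfg Ω) : Prop := diagSet Ω ∈ X.S

/-- `Xα` is the smallest fission of `X` in which `{α}` is a fiber. -/
def SmallestFissionAt (X Xα : CohCfg Ω) (α : Ω) : Prop :=
  X.IsFission Xα ∧ Xα.fiber {α} ∧
    ∀ Y : CohCfg Ω, X.IsFission Y → Y.fiber {α} → Xα.IsFission Y

end CohCfg

/-- The orbits of a permutation group `G ≤ Sym(Ω)` acting componentwise on `Ω × Ω`,
i.e. the basic relations of the coherent configuration `inv(G)`. -/
def orbSets {Ω : Type*} (G : Subgroup (Equiv.Perm Ω)) : Set (Set (Ω × Ω)) :=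
  {r | ∃ p : Ω × Ω, r = {q | ∃ g ∈ G, q.1 = g p.1 ∧ q.2 = g p.2}}

/-- A transitive subgroup of `Sym(Ω)`. -/
def IsTransitiveSub {Ω : Type*} (G : Subgroup (Equiv.Perm Ω)) : Prop :=
  ∀ α β : Ω, ∃ g ∈ G, g α = β

/-- A primitive subgroup of `Sym(Ω)`: transitive, and every block (a set that each group
element maps to itself or to a disjoint set) is trivial. -/
def IsPrimitiveSub {Ω : Type*} (G : Subgroup (Equiv.Perm Ω)) : Prop :=
  IsTransitiveSub G ∧
    ∀ Δ : Set Ω, (∀ g ∈ G, (fun x => g x) '' Δ = Δ ∨ Disjoint ((fun x => g x) '' Δ) Δ) →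
      Δ.Subsingleton ∨ Δ = Set.univ

/-- The intersection number `c_{rs}^t` (well defined for basic relations `r,s,t`). -/
noncomputable def inum {Ω : Type*} (r s t : Set (Ω × Ω)) : ℕ :=
  sSup {n | ∃ p ∈ t, n = Nat.card {γ : Ω // (p.1, γ) ∈ r ∧ (γ, p.2) ∈ s}}

/-- The valency `n_r` of a basic relation (well defined in a scheme). -/
noncomputable def valency {Ω : Type*} (r : Set (Ω × Ω)) : ℕ :=
  sSup {n | ∃ α : Ω, n = ({β : Ω | (α, β) ∈ r}).ncard}

/-- The composition `u·v` of two binary relations. -/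
def compoRel {Ω : Type*} (u v : Set (Ω × Ω)) : Set (Ω × Ω) :=
  {p | ∃ γ : Ω, (p.1, γ) ∈ u ∧ (γ, p.2) ∈ v}

/-- `e` is an equivalence relation on all of `Ω`. -/
def IsEquivRel {Ω : Type*} (e : Set (Ω × Ω)) : Prop :=
  (∀ α : Ω, (α, α) ∈ e) ∧ (∀ p ∈ e, Prod.swap p ∈ e) ∧
    ∀ a b c : Ω, (a, b) ∈ e → (b, c) ∈ e → (a, c) ∈ e

/-- A primitive scheme: the only equivalence relations among its relations are the trivial
ones. -/
def PrimScheme {Ω : Type*} (X : CohCfg Ω) : Prop :=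
  X.IsScheme ∧ ∀ e : Set (Ω × Ω), X.rel e → IsEquivRel e → e = diagSet Ω ∨ e = Set.univ

/-- `X` is schurian: it is the coherent configuration of a permutation group. -/
def Schurian {Ω : Type*} (X : CohCfg Ω) : Prop :=
  ∃ G : Subgroup (Equiv.Perm Ω), X.S = orbSets G

/-- The indistinguishing number `c(X)`: the maximum over non-reflexive basic relations `s`
of the number of points `γ` lying in the same basic relation to both entries of a pair of
`s`. -/
noncomputable def cnum {Ω : Type*} (X : CohCfg Ω) : ℕ :=
  sSup {k | ∃ s ∈ X.S, (∀ p ∈ s, p.1 ≠ p.2) ∧ ∃ p ∈ s,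
    k = ({γ : Ω | ∃ u ∈ X.S, (p.1, γ) ∈ u ∧ (p.2, γ) ∈ u}).ncard}

/-- The maximal valency `n_max` of `X`. -/
noncomputable def nmax {Ω : Type*} (X : CohCfg Ω) : ℕ :=
  sSup {k | ∃ s ∈ X.S, ∃ α : Ω, k = ({β : Ω | (α, β) ∈ s}).ncard}

/-- The orbits on `F × F` of the group `{x ↦ ax + b : a ∈ M, b ∈ F}`, i.e. the basic
relations of the cyclotomic scheme over `F` determined by `M ≤ Fˣ`. -/
def cycOrbSets {F : Type*} [Field F] (M : Subgroup Fˣ) : Set (Set (F × F)) :=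
  {r | ∃ p : F × F, r = {q | ∃ a ∈ M, ∃ b : F,
    q.1 = (a : F) * p.1 + b ∧ q.2 = (a : F) * p.2 + b}}

/-- A witness that `X` is (isomorphic to) a cyclotomic scheme over a finite field. -/
structure CycWitness {Ω : Type u} (X : CohCfg Ω) where
  F : Type u
  [fieldF : Field F]
  [fintypeF : Fintype F]
  M : Subgroup Fˣ
  e : Ω ≃ F
  mem_iff : ∀ r : Set (Ω × Ω), r ∈ X.S ↔
    (fun q : Ω × Ω => (e q.1, e q.2)) '' r ∈ cycOrbSets M

/-- The equivalence relation on `Ω1 × Ω2` whose classes are the sets `Ω1 × {α}`. -/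
def wreathE (Ω1 Ω2 : Type*) : Set ((Ω1 × Ω2) × (Ω1 × Ω2)) := {p | p.1.2 = p.2.2}

/-- The defining conditions of the wreath product `X1 ≀ X2`: the equivalence relation `e`
with classes `Ω1 × {α}` is a relation of `X`; for each `α` the restriction of `X` to
`Ω1 × {α}`, transported along the natural projection, equals `X1`; and the quotient of `X`
modulo `e` equals `X2`. -/
def WreathCond {Ω1 Ω2 : Type*} (X : CohCfg (Ω1 × Ω2)) (X1 : CohCfg Ω1) (X2 : CohCfg Ω2) :
    Prop :=
  X.rel (wreathE Ω1 Ω2) ∧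
  (∀ α : Ω2,
    {u : Set (Ω1 × Ω1) | u.Nonempty ∧ ∃ r ∈ X.S, u = {q | ((q.1, α), (q.2, α)) ∈ r}}
      = X1.S) ∧
  {v : Set (Ω2 × Ω2) | ∃ r ∈ X.S, v = {q | ∃ x y : Ω1, ((x, q.1), (y, q.2)) ∈ r}} = X2.S

/-- `X` is the wreath product `X1 ≀ X2`: the smallest coherent configuration on `Ω1 × Ω2`
satisfying `WreathCond`. -/
def IsWreath {Ω1 Ω2 : Type*} (X : CohCfg (Ω1 × Ω2)) (X1 : CohCfg Ω1) (X2 : CohCfg Ω2) :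
    Prop :=
  WreathCond X X1 X2 ∧ ∀ Y : CohCfg (Ω1 × Ω2), WreathCond Y X1 X2 → X.IsFission Y

/-- The basic relations of the exponentiation `Y ↑ L` of a coherent configuration with
basic relation set `T` on `Γ` by a permutation group `L ≤ Sym({1,…,m})`:
the relations `⋃_{l ∈ L} (t_1 ⊗ ⋯ ⊗ t_m)^l` with all `t_i ∈ T`. -/
def expoS {Γ : Type*} {m : ℕ} (T : Set (Set (Γ × Γ))) (L : Subgroup (Equiv.Perm (Fin m))) :
    Set (Set ((Fin m → Γ) × (Fin m → Γ))) :=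
  {u | ∃ t : Fin m → Set (Γ × Γ), (∀ i, t i ∈ T) ∧
    u = {p | ∃ l ∈ L, ∀ i : Fin m, (p.1 i, p.2 i) ∈ t (l i)}}

/-- Hamming distance on `Γ^m`. -/
noncomputable def hammingD {Γ : Type*} {m : ℕ} (β δ : Fin m → Γ) : ℕ :=
  Set.ncard {i : Fin m | β i ≠ δ i}

/-- Orbits on `V × V` of the affine group `G = V ⋊ K` generated by `K ≤ GL(V)` and all
translations (the basic relations of `inv(G)`). -/
def affOrbSets {F V : Type*} [Field F] [AddCommGroup V] [Module F V]
    (K : Subgroup (V ≃ₗ[F] V)) : Set (Set (V × V)) :=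
  {r | ∃ p : V × V, r = {q | ∃ k ∈ K, ∃ v : V, q.1 = k p.1 + v ∧ q.2 = k p.2 + v}}

/-- `Fix(K) = Σ_{g ∈ K, g ≠ 1} fix(g)`, counted as the number of pairs `(g, v)` with
`g ∈ K \ {1}` and `g v = v`. -/
noncomputable def FixSum {F V : Type*} [Field F] [AddCommGroup V] [Module F V]
    (K : Subgroup (V ≃ₗ[F] V)) : ℕ :=
  Nat.card {x : K × V // x.1 ≠ 1 ∧ (x.1 : V ≃ₗ[F] V) x.2 = x.2}

/-- `fix(K) = max_{g ∈ K, g ≠ 1} fix(g)`. -/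
noncomputable def fixMax {F V : Type*} [Field F] [AddCommGroup V] [Module F V]
    (K : Subgroup (V ≃ₗ[F] V)) : ℕ :=
  sSup {n | ∃ g : K, g ≠ 1 ∧ n = Nat.card {v : V // (g : V ≃ₗ[F] V) v = v}}

/-- Antisymmetry of a family of basic relations. -/
def AntisymS {Γ : Type*} (T : Set (Set (Γ × Γ))) : Prop :=
  ∀ r ∈ T, Prod.swap '' r = r → ∀ p ∈ r, p.1 = p.2

/-- `H ≤ Sym(F_q^e)` is a solvable group containing all translations whose stabilizer of
zero is an irreducible subgroup of `GL(e,q)` that is primitive as a linear group, i.e.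
`inv(H)` is a linearly primitive scheme. -/
def LinPrimGroup (q e : ℕ) (H : Subgroup (Equiv.Perm (Fin e → ZMod q))) : Prop :=
  IsSolvable ↥H ∧
  (∀ v : Fin e → ZMod q, Equiv.addRight v ∈ H) ∧
  (∀ g ∈ H, g 0 = 0 → IsLinearMap (ZMod q) ⇑g) ∧
  (∀ W : Submodule (ZMod q) (Fin e → ZMod q),
      (∀ g ∈ H, g 0 = 0 → ∀ w ∈ W, g w ∈ W) → W = ⊥ ∨ W = ⊤) ∧
  ¬ ∃ (s : ℕ) (V : Fin s → Submodule (ZMod q) (Fin e → ZMod q)),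
      2 ≤ s ∧ (∀ i, V i ≠ ⊥) ∧ (⨆ i, V i) = ⊤ ∧
      (∀ i, V i ⊓ (⨆ j, ⨆ _ : j ≠ i, V j) = ⊥) ∧
      (∀ g ∈ H, g 0 = 0 → ∀ i, ∃ j,
        (fun x => g x) '' ((V i : Set (Fin e → ZMod q))) = (V j : Set (Fin e → ZMod q)))

/-- **Lemma (200311d).** Let `e ∈ S^∪` be an equivalence relation on its support and `I` a
set of classes of `e` such that no class in `I` has the same size as a class outside `I`.
Then the union of the classes in `I` is a union of fibers of `X`. -/
theorem stmt_5 {Ω : Type*} [Fintype Ω] (X : CohCfg Ω) (e : Set (Ω × Ω)) (he : X.rel e)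
    (hsymm : ∀ p ∈ e, Prod.swap p ∈ e)
    (htrans : ∀ a b c : Ω, (a, b) ∈ e → (b, c) ∈ e → (a, c) ∈ e)
    (hrefl : ∀ p ∈ e, (p.1, p.1) ∈ e)
    (I : Set (Set Ω))
    (hI : ∀ c ∈ I, ∃ α : Ω, (α, α) ∈ e ∧ c = {β | (α, β) ∈ e})
    (hsize : ∀ c ∈ I, ∀ α : Ω, (α, α) ∈ e → {β | (α, β) ∈ e} ∉ I →
      c.ncard ≠ ({β | (α, β) ∈ e}).ncard) :
    X.unionFibers (⋃₀ I) := by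
  classical
  obtain ⟨T, hT, heT⟩ := he
  -- Key counting lemma: if (α,α) and (β,β) lie in the same basic relation,
  -- then the e-classes of α and β have the same cardinality.
  have key : ∀ r ∈ X.S, ∀ α β : Ω, (α, α) ∈ r → (β, β) ∈ r →
      ({γ : Ω | (α, γ) ∈ e}).ncard = ({γ : Ω | (β, γ) ∈ e}).ncard := by
    intro r hr α β hα hβ
    have hTfin : T.Finite := Set.toFinite T
    have expand : ∀ δ : Ω, ({γ : Ω | (δ, γ) ∈ e}).ncard =
        ∑ s ∈ hTfin.toFinset, (Finset.univ.filter (fun γ : Ω => (δ, γ) ∈ s)).card := by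
      intro δ
      have hfs : ({γ : Ω | (δ, γ) ∈ e}).ncard =
          (Finset.univ.filter (fun γ : Ω => (δ, γ) ∈ e)).card := by
        rw [Set.ncard_eq_toFinset_card']
        congr 1
        ext γ
        simp [Set.mem_toFinset]
      rw [hfs]
      have hun : (Finset.univ.filter (fun γ : Ω => (δ, γ) ∈ e)) =
          hTfin.toFinset.biUnion (fun s => Finset.univ.filter (fun γ : Ω => (δ, γ) ∈ s)) := by
        ext γ
        simp only [Finset.mem_filter, Finset.mem_biUnion, Finset.mem_univ, true_and,
          Set.Finite.mem_toFinset, heT, Set.mem_sUnion]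
      rw [hun]
      apply Finset.card_biUnion
      intro s hs s' hs' hne
      simp only [Finset.mem_coe, Set.Finite.mem_toFinset] at hs hs'
      refine Finset.disjoint_left.mpr ?_
      intro γ hγ hγ'
      simp only [Finset.mem_filter, Finset.mem_univ, true_and] at hγ hγ'
      obtain ⟨u, -, huniq⟩ := X.exists_unique_mem (δ, γ)
      exact hne ((huniq s ⟨hT hs, hγ⟩).trans (huniq s' ⟨hT hs', hγ'⟩).symm)
    rw [expand α, expand β]
    apply Finset.sum_congr rfl
    intro s hs
    simp only [Set.Finite.mem_toFinset] at hs
    have hsS : s ∈ X.S := hT hs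
    have hswap : Prod.swap '' s ∈ X.S := X.swap_mem s hsS
    have h1 : ∀ δ : Ω, (Finset.univ.filter (fun γ : Ω => (δ, γ) ∈ s)).card =
        Nat.card {γ : Ω // (δ, γ) ∈ s ∧ (γ, δ) ∈ Prod.swap '' s} := by
      intro δ
      rw [Nat.card_eq_fintype_card, Fintype.card_subtype]
      congr 1
      ext γ
      simp only [Finset.mem_filter, Finset.mem_univ, true_and]
      constructor
      · intro h; exact ⟨h, ⟨(δ, γ), h, rfl⟩⟩
      · exact fun h => h.1
    rw [h1 α, h1 β]
    exact X.card_indep s hsS (Prod.swap '' s) hswap r hr (α, α) hα (β, β) hβ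
  refine ⟨{Δ : Set Ω | X.fiber Δ ∧ Δ ⊆ ⋃₀ I}, fun Δ h => h.1, ?_⟩
  ext α
  constructor
  · intro hαI
    obtain ⟨r, ⟨hrS, hαr⟩, -⟩ := X.exists_unique_mem (α, α)
    set Δ : Set Ω := {β : Ω | (β, β) ∈ r} with hΔdef
    have hdiag : ∀ q ∈ r, q.1 = q.2 := X.diag_of_mem r hrS (α, α) hαr rfl
    have hΔfib : X.fiber Δ := by
      have hEq : diagOn Δ = r := by
        ext p
        constructor
        · rintro ⟨h1, h2⟩
          have hp : p = (p.1, p.1) := by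
            ext
            · rfl
            · exact h2.symm
          rw [hp]
          exact h1
        · intro hp
          have h2 := hdiag p hp
          refine ⟨?_, h2⟩
          show (p.1, p.1) ∈ r
          have heq2 : (p.1, p.1) = p := by
            ext
            · rfl
            · exact h2
          rw [heq2]
          exact hp
      unfold CohCfg.fiber
      rw [hEq]
      exact hrS
    obtain ⟨c, hcI, hαc⟩ := hαI
    obtain ⟨α₀, hα₀e, hc⟩ := hI c hcI
    have hα₀α : (α₀, α) ∈ e := by rw [hc] at hαc; exact hαc
    have hαα₀ : (α, α₀) ∈ e := hsymm _ hα₀α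
    have hααe : (α, α) ∈ e := htrans α α₀ α hαα₀ hα₀α
    have hcα : c = {β : Ω | (α, β) ∈ e} := by
      rw [hc]
      ext β
      simp only [Set.mem_setOf_eq]
      exact ⟨fun h => htrans α α₀ β hαα₀ h, fun h => htrans α₀ α β hα₀α h⟩
    have hΔsub : Δ ⊆ ⋃₀ I := by
      intro β hβΔ
      have hcard := key r hrS α β hαr hβΔ
      have hpos : 0 < ({γ : Ω | (α, γ) ∈ e}).ncard :=
        (Set.ncard_pos (Set.toFinite _)).mpr ⟨α, hααe⟩
      have hne : ({γ : Ω | (β, γ) ∈ e}).Nonempty := by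
        rw [hcard] at hpos
        exact (Set.ncard_pos (Set.toFinite _)).mp hpos
      obtain ⟨γ, hβγ⟩ := hne
      have hββ : (β, β) ∈ e := htrans β γ β hβγ (hsymm _ hβγ)
      have hclassI : {γ : Ω | (β, γ) ∈ e} ∈ I := by
        by_contra hnot
        exact hsize c hcI β hββ hnot (by rw [hcα]; exact hcard)
      exact ⟨_, hclassI, hββ⟩
    exact ⟨Δ, ⟨hΔfib, hΔsub⟩, hαr⟩
  · rintro ⟨Δ, ⟨-, hsub⟩, hαΔ⟩
    exact hsub hαΔ
end

section
/- Let X be a coherent configuration on Ω, Π a generalized base of X, and α ∈ Ω. Set Ω' = Ω \ {α}, let X' be the restriction of the smallest fission X_α to Ω', and set Π' = {Γ \ {α} : Γ ∈ Π}. Then Π' is a generalized base of X'. -/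
open Set

section Aux

variable {Γ : Type*}

lemma natCard_one {P : Γ → Prop} {a : Γ} (h : ∀ x, P x ↔ x = a) :
    Nat.card {x // P x} = 1 := by
  have hne : Nonempty {x // P x} := ⟨⟨a, (h a).2 rfl⟩⟩
  have hss : Subsingleton {x // P x} :=
    ⟨fun y z => Subtype.ext (((h y.1).1 y.2).trans ((h z.1).1 z.2).symm)⟩
  exact Nat.card_unique

lemma natCard_zero {P : Γ → Prop} (h : ∀ x, ¬ P x) :
    Nat.card {x // P x} = 0 := by
  have : IsEmpty {x // P x} := ⟨fun y => h y.1 y.2⟩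
  exact Nat.card_of_isEmpty

lemma natCard_iff {P Q : Γ → Prop} (h : ∀ x, P x ↔ Q x) :
    Nat.card {x // P x} = Nat.card {x // Q x} :=
  Nat.card_congr (Equiv.subtypeEquivRight h)

lemma class_eq {Z : CohCfg Γ} {r s : Set (Γ × Γ)} (hr : r ∈ Z.S) (hs : s ∈ Z.S)
    {p : Γ × Γ} (hpr : p ∈ r) (hps : p ∈ s) : r = s := by
  obtain ⟨t, -, ht⟩ := Z.exists_unique_mem p
  rw [ht r ⟨hr, hpr⟩, ht s ⟨hs, hps⟩]

lemma fiber_of_diagpair {Z : CohCfg Γ} {r : Set (Γ × Γ)} (hr : r ∈ Z.S) {β : Γ}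
    (hβ : (β, β) ∈ r) : Z.fiber {x | (x, x) ∈ r} ∧ r = diagOn {x | (x, x) ∈ r} := by
  have hd : ∀ q ∈ r, q.1 = q.2 := fun q hq => Z.diag_of_mem r hr (β, β) hβ rfl q hq
  have he : r = diagOn {x | (x, x) ∈ r} := by
    ext p
    constructor
    · intro hp
      have h2 := hd p hp
      refine ⟨?_, h2⟩
      show (p.1, p.1) ∈ r
      have : p = (p.1, p.1) := by rw [Prod.ext_iff]; exact ⟨rfl, h2.symm⟩
      rwa [← this]
    · rintro ⟨h1, h2⟩
      have : p = (p.1, p.1) := by rw [Prod.ext_iff]; exact ⟨rfl, h2.symm⟩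
      rw [this]; exact h1
  exact ⟨by rw [CohCfg.fiber, ← he]; exact hr, he⟩

lemma exists_fiber (Z : CohCfg Γ) (β : Γ) : ∃ Δ, Z.fiber Δ ∧ β ∈ Δ := by
  obtain ⟨r, ⟨hr, hβ⟩, -⟩ := Z.exists_unique_mem (β, β)
  obtain ⟨hf, -⟩ := fiber_of_diagpair hr hβ
  exact ⟨_, hf, hβ⟩

lemma fiber_eq {Z : CohCfg Γ} {Δ1 Δ2 : Set Γ} (h1 : Z.fiber Δ1) (h2 : Z.fiber Δ2)
    {β : Γ} (hβ1 : β ∈ Δ1) (hβ2 : β ∈ Δ2) : Δ1 = Δ2 := by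
  have he : diagOn Δ1 = diagOn Δ2 :=
    class_eq h1 h2 (p := (β, β)) ⟨hβ1, rfl⟩ ⟨hβ2, rfl⟩
  ext x
  constructor
  · intro hx
    have : (x, x) ∈ diagOn Δ2 := he ▸ (⟨hx, rfl⟩ : (x, x) ∈ diagOn Δ1)
    exact this.1
  · intro hx
    have : (x, x) ∈ diagOn Δ1 := he.symm ▸ (⟨hx, rfl⟩ : (x, x) ∈ diagOn Δ2)
    exact this.1

lemma fiber_nonempty {Z : CohCfg Γ} {Δ : Set Γ} (h : Z.fiber Δ) : Δ.Nonempty := by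
  obtain ⟨p, hp⟩ := Z.nonempty_of_mem _ h
  exact ⟨p.1, hp.1⟩

lemma support_fst {Z : CohCfg Γ} {u : Set (Γ × Γ)} {Δ : Set Γ}
    (hu : u ∈ Z.S) (hΔ : Z.fiber Δ) :
    (∀ p ∈ u, p.1 ∈ Δ) ∨ (∀ p ∈ u, p.1 ∉ Δ) := by
  by_cases h : ∃ p ∈ u, p.1 ∈ Δ
  · obtain ⟨p, hp, hp1⟩ := h
    left
    intro q hq
    by_contra hq1
    have hcard := Z.card_indep _ hΔ u hu u hu p hp q hq
    have e1 : Nat.card {γ : Γ // (p.1, γ) ∈ diagOn Δ ∧ (γ, p.2) ∈ u} = 1 := by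
      apply natCard_one (a := p.1)
      intro x
      constructor
      · rintro ⟨⟨-, h2⟩, -⟩; exact h2.symm
      · rintro rfl; exact ⟨⟨hp1, rfl⟩, hp⟩
    have e0 : Nat.card {γ : Γ // (q.1, γ) ∈ diagOn Δ ∧ (γ, q.2) ∈ u} = 0 := by
      apply natCard_zero
      rintro x ⟨⟨h1, -⟩, -⟩; exact hq1 h1
    rw [e1, e0] at hcard
    exact one_ne_zero hcard
  · right
    intro p hp hp1
    exact h ⟨p, hp, hp1⟩

lemma support_snd {Z : CohCfg Γ} {u : Set (Γ × Γ)} {Δ : Set Γ}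
    (hu : u ∈ Z.S) (hΔ : Z.fiber Δ) :
    (∀ p ∈ u, p.2 ∈ Δ) ∨ (∀ p ∈ u, p.2 ∉ Δ) := by
  by_cases h : ∃ p ∈ u, p.2 ∈ Δ
  · obtain ⟨p, hp, hp2⟩ := h
    left
    intro q hq
    by_contra hq2
    have hcard := Z.card_indep u hu _ hΔ u hu p hp q hq
    have e1 : Nat.card {γ : Γ // (p.1, γ) ∈ u ∧ (γ, p.2) ∈ diagOn Δ} = 1 := by
      apply natCard_one (a := p.2)
      intro x
      constructor
      · rintro ⟨-, -, h2⟩; exact h2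
      · rintro rfl; exact ⟨hp, hp2, rfl⟩
    have e0 : Nat.card {γ : Γ // (q.1, γ) ∈ u ∧ (γ, q.2) ∈ diagOn Δ} = 0 := by
      apply natCard_zero
      rintro x ⟨-, h1, h2⟩; exact hq2 (h2 ▸ h1)
    rw [e1, e0] at hcard
    exact one_ne_zero hcard
  · right
    intro p hp hp2
    exact h ⟨p, hp, hp2⟩

lemma rel_of_mem {Z : CohCfg Γ} {s : Set (Γ × Γ)} (hs : s ∈ Z.S) : Z.rel s :=
  ⟨{s}, by simpa using hs, (Set.sUnion_singleton s).symm⟩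

lemma rel_sUnion {Z : CohCfg Γ} {T : Set (Set (Γ × Γ))} (h : ∀ v ∈ T, Z.rel v) :
    Z.rel (⋃₀ T) := by
  refine ⟨{s | s ∈ Z.S ∧ ∃ v ∈ T, s ⊆ v ∧ ∃ F ⊆ Z.S, v = ⋃₀ F ∧ s ∈ F},
    fun s hs => hs.1, ?_⟩
  apply subset_antisymm
  · intro x hx
    obtain ⟨v, hv, hxv⟩ := hx
    obtain ⟨F, hF, hvF⟩ := h v hv
    rw [hvF] at hxv
    obtain ⟨s, hsF, hxs⟩ := hxv
    exact ⟨s, ⟨hF hsF, v, hv, by rw [hvF]; exact Set.subset_sUnion_of_mem hsF,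
      F, hF, hvF, hsF⟩, hxs⟩
  · intro x hx
    obtain ⟨s, ⟨-, v, hv, hsv, -⟩, hxs⟩ := hx
    exact ⟨v, hv, hsv hxs⟩

lemma lemA {Z : CohCfg Γ} {u : Set (Γ × Γ)} {Δ1 Δ : Set Γ} (hu : u ∈ Z.S)
    (h1 : Z.fiber Δ1) (hΔ : Z.fiber Δ) {b b2 : Γ} (hb : b ∈ Δ) (hb2 : b2 ∈ Δ) :
    Nat.card {γ // γ ∈ Δ1 ∧ (γ, b) ∈ u} = Nat.card {γ // γ ∈ Δ1 ∧ (γ, b2) ∈ u} := by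
  rcases support_fst hu h1 with hall | hnone
  · have key : ∀ c : Γ, Nat.card {γ // γ ∈ Δ1 ∧ (γ, c) ∈ u} =
        Nat.card {γ : Γ // (c, γ) ∈ Prod.swap '' u ∧ (γ, c) ∈ u} := by
      intro c
      apply natCard_iff
      intro x
      constructor
      · rintro ⟨-, h2⟩; exact ⟨⟨(x, c), h2, rfl⟩, h2⟩
      · rintro ⟨-, h2⟩; exact ⟨hall (x, c) h2, h2⟩
    rw [key b, key b2]
    exact Z.card_indep _ (Z.swap_mem u hu) u hu _ hΔ (b, b) ⟨hb, rfl⟩ (b2, b2) ⟨hb2, rfl⟩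
  · rw [natCard_zero (fun x hx => hnone (x, b) hx.2 hx.1),
      natCard_zero (fun x hx => hnone (x, b2) hx.2 hx.1)]

lemma lemB {Z : CohCfg Γ} {u : Set (Γ × Γ)} {Δ2 Δ : Set Γ} (hu : u ∈ Z.S)
    (h2 : Z.fiber Δ2) (hΔ : Z.fiber Δ) {b b2 : Γ} (hb : b ∈ Δ) (hb2 : b2 ∈ Δ) :
    Nat.card {γ // (b, γ) ∈ u ∧ γ ∈ Δ2} = Nat.card {γ // (b2, γ) ∈ u ∧ γ ∈ Δ2} := by
  rcases support_snd hu h2 with hall | hnone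
  · have key : ∀ c : Γ, Nat.card {γ // (c, γ) ∈ u ∧ γ ∈ Δ2} =
        Nat.card {γ : Γ // (c, γ) ∈ u ∧ (γ, c) ∈ Prod.swap '' u} := by
      intro c
      apply natCard_iff
      intro x
      constructor
      · rintro ⟨h1, -⟩; exact ⟨h1, ⟨(c, x), h1, rfl⟩⟩
      · rintro ⟨h1, -⟩; exact ⟨h1, hall (c, x) h1⟩
    rw [key b, key b2]
    exact Z.card_indep u hu _ (Z.swap_mem u hu) _ hΔ (b, b) ⟨hb, rfl⟩ (b2, b2) ⟨hb2, rfl⟩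
  · rw [natCard_zero (fun x hx => hnone (b, x) hx.1 hx.2),
      natCard_zero (fun x hx => hnone (b2, x) hx.1 hx.2)]

end Aux
section Pext

variable {Ω : Type*} (α : Ω)

/-- Embedding of a relation on `Ω \ {α}` into `Ω × Ω`. -/
def pemb (u : Set ({x : Ω // x ≠ α} × {x : Ω // x ≠ α})) : Set (Ω × Ω) :=
  {p | ∃ (h1 : p.1 ≠ α) (h2 : p.2 ≠ α), ((⟨p.1, h1⟩ : {x : Ω // x ≠ α}), (⟨p.2, h2⟩ : {x : Ω // x ≠ α})) ∈ u}

def prow (Δ : Set {x : Ω // x ≠ α}) : Set (Ω × Ω) :=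
  {p | p.1 = α ∧ ∃ h : p.2 ≠ α, (⟨p.2, h⟩ : {x : Ω // x ≠ α}) ∈ Δ}

def pcol (Δ : Set {x : Ω // x ≠ α}) : Set (Ω × Ω) :=
  {p | (∃ h : p.1 ≠ α, (⟨p.1, h⟩ : {x : Ω // x ≠ α}) ∈ Δ) ∧ p.2 = α}

def pextS (Y : CohCfg {x : Ω // x ≠ α}) : Set (Set (Ω × Ω)) :=
  {v | (∃ u ∈ Y.S, v = pemb α u) ∨ (∃ Δ, Y.fiber Δ ∧ v = prow α Δ) ∨
       (∃ Δ, Y.fiber Δ ∧ v = pcol α Δ) ∨ v = {(α, α)}}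

variable {α}

lemma mem_pemb {u : Set ({x : Ω // x ≠ α} × {x : Ω // x ≠ α})} {x y : Ω}
    (hx : x ≠ α) (hy : y ≠ α) :
    (x, y) ∈ pemb α u ↔ ((⟨x, hx⟩ : {x : Ω // x ≠ α}), (⟨y, hy⟩ : {x : Ω // x ≠ α})) ∈ u :=
  ⟨fun ⟨_, _, h⟩ => h, fun h => ⟨hx, hy, h⟩⟩

lemma pemb_fst_ne {u : Set ({x : Ω // x ≠ α} × {x : Ω // x ≠ α})} {p : Ω × Ω}
    (h : p ∈ pemb α u) : p.1 ≠ α := h.choose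

lemma pemb_snd_ne {u : Set ({x : Ω // x ≠ α} × {x : Ω // x ≠ α})} {p : Ω × Ω}
    (h : p ∈ pemb α u) : p.2 ≠ α := h.choose_spec.choose

lemma mem_pemb_coe {u : Set ({x : Ω // x ≠ α} × {x : Ω // x ≠ α})}
    {q : {x : Ω // x ≠ α} × {x : Ω // x ≠ α}} :
    ((q.1 : Ω), (q.2 : Ω)) ∈ pemb α u ↔ q ∈ u := by
  rw [mem_pemb q.1.2 q.2.2]

lemma pemb_sUnion (F : Set (Set ({x : Ω // x ≠ α} × {x : Ω // x ≠ α}))) :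
    pemb α (⋃₀ F) = ⋃₀ ((pemb α) '' F) := by
  ext p
  constructor
  · rintro ⟨h1, h2, f, hfF, hf⟩
    exact ⟨pemb α f, ⟨f, hfF, rfl⟩, h1, h2, hf⟩
  · rintro ⟨v, ⟨f, hfF, rfl⟩, h1, h2, hf⟩
    exact ⟨h1, h2, f, hfF, hf⟩

lemma prow_sUnion (F : Set (Set {x : Ω // x ≠ α})) :
    prow α (⋃₀ F) = ⋃₀ ((prow α) '' F) := by
  ext p
  constructor
  · rintro ⟨h1, h2, Δ, hΔF, hΔ⟩
    exact ⟨prow α Δ, ⟨Δ, hΔF, rfl⟩, h1, h2, hΔ⟩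
  · rintro ⟨v, ⟨Δ, hΔF, rfl⟩, h1, h2, hΔ⟩
    exact ⟨h1, h2, Δ, hΔF, hΔ⟩

lemma pcol_sUnion (F : Set (Set {x : Ω // x ≠ α})) :
    pcol α (⋃₀ F) = ⋃₀ ((pcol α) '' F) := by
  ext p
  constructor
  · rintro ⟨⟨h1, Δ, hΔF, hΔ⟩, h2⟩
    exact ⟨pcol α Δ, ⟨Δ, hΔF, rfl⟩, ⟨h1, hΔ⟩, h2⟩
  · rintro ⟨v, ⟨Δ, hΔF, rfl⟩, ⟨h1, hΔ⟩, h2⟩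
    exact ⟨⟨h1, Δ, hΔF, hΔ⟩, h2⟩

lemma natCard_restrict {P : Ω → Prop} {Q : {x : Ω // x ≠ α} → Prop}
    (h0 : ∀ x, P x → x ≠ α) (h : ∀ (x : Ω) (hx : x ≠ α), P x ↔ Q ⟨x, hx⟩) :
    Nat.card {x : Ω // P x} = Nat.card {y : {x : Ω // x ≠ α} // Q y} := by
  apply Nat.card_congr
  exact ⟨fun z => ⟨⟨z.1, h0 z.1 z.2⟩, (h z.1 (h0 z.1 z.2)).1 z.2⟩,
    fun w => ⟨w.1.1, (h w.1.1 w.1.2).2 w.2⟩,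
    fun z => Subtype.ext rfl, fun w => Subtype.ext (Subtype.ext rfl)⟩

end Pext
section PextFields

variable {Ω : Type*} {α : Ω} (Y : CohCfg {x : Ω // x ≠ α})

lemma pext_nonempty : ∀ r ∈ pextS α Y, r.Nonempty := by
  rintro r (⟨u, hu, rfl⟩ | ⟨Δ, hΔ, rfl⟩ | ⟨Δ, hΔ, rfl⟩ | rfl)
  · obtain ⟨q, hq⟩ := Y.nonempty_of_mem u hu
    exact ⟨((q.1 : Ω), (q.2 : Ω)), q.1.2, q.2.2, hq⟩
  · obtain ⟨z, hz⟩ := fiber_nonempty hΔ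
    exact ⟨(α, (z : Ω)), rfl, z.2, hz⟩
  · obtain ⟨z, hz⟩ := fiber_nonempty hΔ
    exact ⟨((z : Ω), α), ⟨z.2, hz⟩, rfl⟩
  · exact ⟨(α, α), rfl⟩

lemma pext_unique : ∀ p : Ω × Ω, ∃! r : Set (Ω × Ω), r ∈ pextS α Y ∧ p ∈ r := by
  rintro ⟨x, y⟩
  by_cases hx : x = α <;> by_cases hy : y = α
  · obtain rfl : α = x := hx.symm
    obtain rfl : α = y := hy.symm
    refine ⟨{(α, α)}, ⟨Or.inr (Or.inr (Or.inr rfl)), rfl⟩, ?_⟩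
    rintro v ⟨(⟨u, hu, rfl⟩ | ⟨Δ, hΔ, rfl⟩ | ⟨Δ, hΔ, rfl⟩ | rfl), hv⟩
    · exact absurd rfl (pemb_fst_ne hv)
    · exact absurd rfl hv.2.choose
    · exact absurd rfl hv.1.choose
    · rfl
  · obtain rfl : α = x := hx.symm
    obtain ⟨Δ, hΔ, hyΔ⟩ := exists_fiber Y ⟨y, hy⟩
    refine ⟨prow α Δ, ⟨Or.inr (Or.inl ⟨Δ, hΔ, rfl⟩), rfl, hy, hyΔ⟩, ?_⟩
    rintro v ⟨(⟨u, hu, rfl⟩ | ⟨Δ2, hΔ2, rfl⟩ | ⟨Δ2, hΔ2, rfl⟩ | rfl), hv⟩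
    · exact absurd rfl (pemb_fst_ne hv)
    · obtain ⟨-, h2, hm⟩ := hv
      rw [fiber_eq hΔ2 hΔ hm hyΔ]
    · exact absurd rfl hv.1.choose
    · exact absurd (congrArg Prod.snd hv) hy
  · obtain rfl : α = y := hy.symm
    obtain ⟨Δ, hΔ, hxΔ⟩ := exists_fiber Y ⟨x, hx⟩
    refine ⟨pcol α Δ, ⟨Or.inr (Or.inr (Or.inl ⟨Δ, hΔ, rfl⟩)), ⟨hx, hxΔ⟩, rfl⟩, ?_⟩
    rintro v ⟨(⟨u, hu, rfl⟩ | ⟨Δ2, hΔ2, rfl⟩ | ⟨Δ2, hΔ2, rfl⟩ | rfl), hv⟩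
    · exact absurd rfl (pemb_snd_ne hv)
    · exact absurd hv.1 hx
    · obtain ⟨⟨h1, hm⟩, -⟩ := hv
      rw [fiber_eq hΔ2 hΔ hm hxΔ]
    · exact absurd (congrArg Prod.fst hv) hx
  · obtain ⟨u, ⟨hu, hpu⟩, hun⟩ := Y.exists_unique_mem (⟨x, hx⟩, ⟨y, hy⟩)
    refine ⟨pemb α u, ⟨Or.inl ⟨u, hu, rfl⟩, hx, hy, hpu⟩, ?_⟩
    rintro v ⟨(⟨u2, hu2, rfl⟩ | ⟨Δ2, hΔ2, rfl⟩ | ⟨Δ2, hΔ2, rfl⟩ | rfl), hv⟩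
    · obtain ⟨h1, h2, hm⟩ := hv
      rw [hun u2 ⟨hu2, hm⟩]
    · exact absurd hv.1 hx
    · exact absurd hv.2 hy
    · exact absurd (congrArg Prod.fst hv) hx

lemma pext_diag : ∀ r ∈ pextS α Y, ∀ p ∈ r, p.1 = p.2 → ∀ q ∈ r, q.1 = q.2 := by
  rintro r (⟨u, hu, rfl⟩ | ⟨Δ, hΔ, rfl⟩ | ⟨Δ, hΔ, rfl⟩ | rfl) p hp hd q hq
  · obtain ⟨h1, h2, hm⟩ := hp
    obtain ⟨g1, g2, gm⟩ := hq
    have hd' : ((⟨p.1, h1⟩ : {x : Ω // x ≠ α}), (⟨p.2, h2⟩ : {x : Ω // x ≠ α})).1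
        = ((⟨p.1, h1⟩ : {x : Ω // x ≠ α}), (⟨p.2, h2⟩ : {x : Ω // x ≠ α})).2 :=
      Subtype.ext hd
    have := Y.diag_of_mem u hu _ hm hd' _ gm
    exact congrArg Subtype.val this
  · exact absurd (hd.symm.trans hp.1) hp.2.choose
  · exact absurd (hd.trans hp.2) hp.1.choose
  · rw [hq]

lemma pext_swap : ∀ r ∈ pextS α Y, Prod.swap '' r ∈ pextS α Y := by
  rintro r (⟨u, hu, rfl⟩ | ⟨Δ, hΔ, rfl⟩ | ⟨Δ, hΔ, rfl⟩ | rfl)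
  · refine Or.inl ⟨Prod.swap '' u, Y.swap_mem u hu, ?_⟩
    ext p
    constructor
    · rintro ⟨q, ⟨h1, h2, hm⟩, rfl⟩
      exact ⟨h2, h1, ((⟨q.1, h1⟩ : {x : Ω // x ≠ α}), (⟨q.2, h2⟩ : {x : Ω // x ≠ α})), hm, rfl⟩
    · rintro ⟨h1, h2, q, hqu, hq⟩
      refine ⟨((q.1 : Ω), (q.2 : Ω)), mem_pemb_coe.2 hqu, ?_⟩
      have e1 : q.2 = (⟨p.1, h1⟩ : {x : Ω // x ≠ α}) := congrArg Prod.fst hq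
      have e2 : q.1 = (⟨p.2, h2⟩ : {x : Ω // x ≠ α}) := congrArg Prod.snd hq
      rw [Prod.ext_iff]
      exact ⟨congrArg Subtype.val e1, congrArg Subtype.val e2⟩
  · refine Or.inr (Or.inr (Or.inl ⟨Δ, hΔ, ?_⟩))
    ext p
    constructor
    · rintro ⟨q, ⟨h1, h2, hm⟩, rfl⟩
      exact ⟨⟨h2, hm⟩, h1⟩
    · rintro ⟨⟨h1, hm⟩, h2⟩
      exact ⟨(p.2, p.1), ⟨h2, h1, hm⟩, rfl⟩
  · refine Or.inr (Or.inl ⟨Δ, hΔ, ?_⟩)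
    ext p
    constructor
    · rintro ⟨q, ⟨⟨h1, hm⟩, h2⟩, rfl⟩
      exact ⟨h2, h1, hm⟩
    · rintro ⟨h1, h2, hm⟩
      exact ⟨(p.2, p.1), ⟨⟨h2, hm⟩, h1⟩, rfl⟩
  · refine Or.inr (Or.inr (Or.inr ?_))
    rw [Set.image_singleton]
    rfl

end PextFields
section PextCard

variable {Ω : Type*} {α : Ω} {Y : CohCfg {x : Ω // x ≠ α}}

private lemma cc0 {r s : Set (Ω × Ω)} {x y x2 y2 : Ω}
    (h1 : ∀ γ : Ω, ¬((x, γ) ∈ r ∧ (γ, y) ∈ s))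
    (h2 : ∀ γ : Ω, ¬((x2, γ) ∈ r ∧ (γ, y2) ∈ s)) :
    Nat.card {γ : Ω // (x, γ) ∈ r ∧ (γ, y) ∈ s} =
    Nat.card {γ : Ω // (x2, γ) ∈ r ∧ (γ, y2) ∈ s} :=
  (natCard_zero h1).trans (natCard_zero h2).symm

lemma pext_card (Y : CohCfg {x : Ω // x ≠ α}) :
    ∀ r ∈ pextS α Y, ∀ s ∈ pextS α Y, ∀ t ∈ pextS α Y, ∀ p ∈ t, ∀ q ∈ t,
    Nat.card {γ : Ω // (p.1, γ) ∈ r ∧ (γ, p.2) ∈ s} =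
    Nat.card {γ : Ω // (q.1, γ) ∈ r ∧ (γ, q.2) ∈ s} := by
  intro r hr s hs t ht p hp q hq
  obtain ⟨x, y⟩ := p
  obtain ⟨x2, y2⟩ := q
  show Nat.card {γ : Ω // (x, γ) ∈ r ∧ (γ, y) ∈ s} =
    Nat.card {γ : Ω // (x2, γ) ∈ r ∧ (γ, y2) ∈ s}
  rcases ht with ⟨w, hw, rfl⟩ | ⟨Δ, hΔ, rfl⟩ | ⟨Δ, hΔ, rfl⟩ | rfl
  -- ===================== t = pemb w =====================
  · obtain ⟨hx, hy, hpw⟩ := hp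
    obtain ⟨hx2, hy2, hqw⟩ := hq
    rcases hr with ⟨u, hu, rfl⟩ | ⟨Δ1, hΔ1, rfl⟩ | ⟨Δ1, hΔ1, rfl⟩ | rfl
    -- r = pemb u
    · rcases hs with ⟨v, hv, rfl⟩ | ⟨Δ2, hΔ2, rfl⟩ | ⟨Δ2, hΔ2, rfl⟩ | rfl
      · -- s = pemb v : the main interior case
        have ep : Nat.card {γ : Ω // (x, γ) ∈ pemb α u ∧ (γ, y) ∈ pemb α v} =
            Nat.card {γ' : {z : Ω // z ≠ α} //
              ((⟨x, hx⟩ : {z : Ω // z ≠ α}), γ') ∈ u ∧ (γ', (⟨y, hy⟩ : {z : Ω // z ≠ α})) ∈ v} := by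
          apply natCard_restrict
          · exact fun γ h => pemb_snd_ne h.1
          · intro γ hγ
            constructor
            · rintro ⟨⟨h1, h2, m1⟩, ⟨h3, h4, m2⟩⟩; exact ⟨m1, m2⟩
            · rintro ⟨m1, m2⟩; exact ⟨⟨hx, hγ, m1⟩, ⟨hγ, hy, m2⟩⟩
        have eq2 : Nat.card {γ : Ω // (x2, γ) ∈ pemb α u ∧ (γ, y2) ∈ pemb α v} =
            Nat.card {γ' : {z : Ω // z ≠ α} //
              ((⟨x2, hx2⟩ : {z : Ω // z ≠ α}), γ') ∈ u ∧ (γ', (⟨y2, hy2⟩ : {z : Ω // z ≠ α})) ∈ v} := by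
          apply natCard_restrict
          · exact fun γ h => pemb_snd_ne h.1
          · intro γ hγ
            constructor
            · rintro ⟨⟨h1, h2, m1⟩, ⟨h3, h4, m2⟩⟩; exact ⟨m1, m2⟩
            · rintro ⟨m1, m2⟩; exact ⟨⟨hx2, hγ, m1⟩, ⟨hγ, hy2, m2⟩⟩
        rw [ep, eq2]
        exact Y.card_indep u hu v hv w hw _ hpw _ hqw
      · exact cc0 (fun γ h => pemb_snd_ne h.1 h.2.1) (fun γ h => pemb_snd_ne h.1 h.2.1)
      · exact cc0 (fun γ h => hy h.2.2) (fun γ h => hy2 h.2.2)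
      · exact cc0 (fun γ h => hy (congrArg Prod.snd h.2))
          (fun γ h => hy2 (congrArg Prod.snd h.2))
    -- r = prow Δ1
    · exact cc0 (fun γ h => hx h.1.1) (fun γ h => hx2 h.1.1)
    -- r = pcol Δ1
    · rcases hs with ⟨v, hv, rfl⟩ | ⟨Δ2, hΔ2, rfl⟩ | ⟨Δ2, hΔ2, rfl⟩ | rfl
      · exact cc0 (fun γ h => pemb_fst_ne h.2 h.1.2) (fun γ h => pemb_fst_ne h.2 h.1.2)
      · -- s = prow Δ2 : the "through α" case
        have hiff : (((⟨x, hx⟩ : {z : Ω // z ≠ α}) ∈ Δ1) ∧ ((⟨y, hy⟩ : {z : Ω // z ≠ α}) ∈ Δ2)) ↔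
            (((⟨x2, hx2⟩ : {z : Ω // z ≠ α}) ∈ Δ1) ∧ ((⟨y2, hy2⟩ : {z : Ω // z ≠ α}) ∈ Δ2)) := by
          rcases support_fst hw hΔ1 with ha | ha <;> rcases support_snd hw hΔ2 with hb | hb
          · exact ⟨fun _ => ⟨ha _ hqw, hb _ hqw⟩, fun _ => ⟨ha _ hpw, hb _ hpw⟩⟩
          · exact ⟨fun h => absurd h.2 (hb _ hpw), fun h => absurd h.2 (hb _ hqw)⟩
          · exact ⟨fun h => absurd h.1 (ha _ hpw), fun h => absurd h.1 (ha _ hqw)⟩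
          · exact ⟨fun h => absurd h.1 (ha _ hpw), fun h => absurd h.1 (ha _ hqw)⟩
        by_cases hc : ((⟨x, hx⟩ : {z : Ω // z ≠ α}) ∈ Δ1) ∧ ((⟨y, hy⟩ : {z : Ω // z ≠ α}) ∈ Δ2)
        · have e1 : Nat.card {γ : Ω // (x, γ) ∈ pcol α Δ1 ∧ (γ, y) ∈ prow α Δ2} = 1 := by
            apply natCard_one (a := α)
            intro γ
            constructor
            · rintro ⟨h1, -⟩; exact h1.2
            · rintro rfl; exact ⟨⟨⟨hx, hc.1⟩, rfl⟩, rfl, hy, hc.2⟩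
          have e2 : Nat.card {γ : Ω // (x2, γ) ∈ pcol α Δ1 ∧ (γ, y2) ∈ prow α Δ2} = 1 := by
            have hc2 := hiff.1 hc
            apply natCard_one (a := α)
            intro γ
            constructor
            · rintro ⟨h1, -⟩; exact h1.2
            · rintro rfl; exact ⟨⟨⟨hx2, hc2.1⟩, rfl⟩, rfl, hy2, hc2.2⟩
          exact e1.trans e2.symm
        · exact cc0 (fun γ h => hc ⟨h.1.1.choose_spec, h.2.2.choose_spec⟩)
            (fun γ h => hc (hiff.2 ⟨h.1.1.choose_spec, h.2.2.choose_spec⟩))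
      · exact cc0 (fun γ h => hy h.2.2) (fun γ h => hy2 h.2.2)
      · exact cc0 (fun γ h => hy (congrArg Prod.snd h.2))
          (fun γ h => hy2 (congrArg Prod.snd h.2))
    -- r = {(α,α)}
    · exact cc0 (fun γ h => hx (congrArg Prod.fst h.1))
        (fun γ h => hx2 (congrArg Prod.fst h.1))
  -- ===================== t = prow Δ =====================
  · obtain ⟨hx, hy, hpΔ⟩ := hp
    obtain ⟨hx2, hy2, hqΔ⟩ := hq
    rcases hr with ⟨u, hu, rfl⟩ | ⟨Δ1, hΔ1, rfl⟩ | ⟨Δ1, hΔ1, rfl⟩ | rfl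
    -- r = pemb u
    · exact cc0 (fun γ h => pemb_fst_ne h.1 hx) (fun γ h => pemb_fst_ne h.1 hx2)
    -- r = prow Δ1
    · rcases hs with ⟨v, hv, rfl⟩ | ⟨Δ2, hΔ2, rfl⟩ | ⟨Δ2, hΔ2, rfl⟩ | rfl
      · -- s = pemb v
        have ep : Nat.card {γ : Ω // (x, γ) ∈ prow α Δ1 ∧ (γ, y) ∈ pemb α v} =
            Nat.card {γ' : {z : Ω // z ≠ α} //
              γ' ∈ Δ1 ∧ (γ', (⟨y, hy⟩ : {z : Ω // z ≠ α})) ∈ v} := by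
          apply natCard_restrict
          · exact fun γ h => h.1.2.choose
          · intro γ hγ
            constructor
            · rintro ⟨⟨-, h2, m1⟩, ⟨h3, h4, m2⟩⟩; exact ⟨m1, m2⟩
            · rintro ⟨m1, m2⟩; exact ⟨⟨hx, hγ, m1⟩, ⟨hγ, hy, m2⟩⟩
        have eq2 : Nat.card {γ : Ω // (x2, γ) ∈ prow α Δ1 ∧ (γ, y2) ∈ pemb α v} =
            Nat.card {γ' : {z : Ω // z ≠ α} //
              γ' ∈ Δ1 ∧ (γ', (⟨y2, hy2⟩ : {z : Ω // z ≠ α})) ∈ v} := by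
          apply natCard_restrict
          · exact fun γ h => h.1.2.choose
          · intro γ hγ
            constructor
            · rintro ⟨⟨-, h2, m1⟩, ⟨h3, h4, m2⟩⟩; exact ⟨m1, m2⟩
            · rintro ⟨m1, m2⟩; exact ⟨⟨hx2, hγ, m1⟩, ⟨hγ, hy2, m2⟩⟩
        rw [ep, eq2]
        exact lemA hv hΔ1 hΔ hpΔ hqΔ
      · exact cc0 (fun γ h => h.1.2.choose h.2.1) (fun γ h => h.1.2.choose h.2.1)
      · exact cc0 (fun γ h => hy h.2.2) (fun γ h => hy2 h.2.2)
      · exact cc0 (fun γ h => hy (congrArg Prod.snd h.2))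
          (fun γ h => hy2 (congrArg Prod.snd h.2))
    -- r = pcol Δ1
    · exact cc0 (fun γ h => h.1.1.choose hx) (fun γ h => h.1.1.choose hx2)
    -- r = {(α,α)}
    · rcases hs with ⟨v, hv, rfl⟩ | ⟨Δ2, hΔ2, rfl⟩ | ⟨Δ2, hΔ2, rfl⟩ | rfl
      · exact cc0 (fun γ h => pemb_fst_ne h.2 (congrArg Prod.snd h.1))
          (fun γ h => pemb_fst_ne h.2 (congrArg Prod.snd h.1))
      · -- s = prow Δ2
        by_cases hm : (⟨y, hy⟩ : {z : Ω // z ≠ α}) ∈ Δ2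
        · have hm2 : (⟨y2, hy2⟩ : {z : Ω // z ≠ α}) ∈ Δ2 := by
            have : Δ = Δ2 := fiber_eq hΔ hΔ2 hpΔ hm
            rw [← this]; exact hqΔ
          have e1 : Nat.card {γ : Ω // (x, γ) ∈ ({(α, α)} : Set (Ω × Ω)) ∧ (γ, y) ∈ prow α Δ2} = 1 := by
            apply natCard_one (a := α)
            intro γ
            constructor
            · rintro ⟨h1, -⟩; exact congrArg Prod.snd h1
            · rintro rfl
              refine ⟨?_, rfl, hy, hm⟩
              rw [Set.mem_singleton_iff, Prod.ext_iff]; exact ⟨hx, rfl⟩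
          have e2 : Nat.card {γ : Ω // (x2, γ) ∈ ({(α, α)} : Set (Ω × Ω)) ∧ (γ, y2) ∈ prow α Δ2} = 1 := by
            apply natCard_one (a := α)
            intro γ
            constructor
            · rintro ⟨h1, -⟩; exact congrArg Prod.snd h1
            · rintro rfl
              refine ⟨?_, rfl, hy2, hm2⟩
              rw [Set.mem_singleton_iff, Prod.ext_iff]; exact ⟨hx2, rfl⟩
          exact e1.trans e2.symm
        · refine cc0 (fun γ h => hm h.2.2.choose_spec) (fun γ h => hm ?_)
          have hm2 : (⟨y2, hy2⟩ : {z : Ω // z ≠ α}) ∈ Δ2 := h.2.2.choose_spec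
          have : Δ2 = Δ := fiber_eq hΔ2 hΔ hm2 hqΔ
          rw [this]; exact hpΔ
      · exact cc0 (fun γ h => hy h.2.2) (fun γ h => hy2 h.2.2)
      · exact cc0 (fun γ h => hy (congrArg Prod.snd h.2))
          (fun γ h => hy2 (congrArg Prod.snd h.2))
  -- ===================== t = pcol Δ =====================
  · obtain ⟨⟨hx, hpΔ⟩, hy⟩ := hp
    obtain ⟨⟨hx2, hqΔ⟩, hy2⟩ := hq
    rcases hr with ⟨u, hu, rfl⟩ | ⟨Δ1, hΔ1, rfl⟩ | ⟨Δ1, hΔ1, rfl⟩ | rfl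
    -- r = pemb u
    · rcases hs with ⟨v, hv, rfl⟩ | ⟨Δ2, hΔ2, rfl⟩ | ⟨Δ2, hΔ2, rfl⟩ | rfl
      · exact cc0 (fun γ h => pemb_snd_ne h.2 hy) (fun γ h => pemb_snd_ne h.2 hy2)
      · exact cc0 (fun γ h => h.2.2.choose hy) (fun γ h => h.2.2.choose hy2)
      · -- s = pcol Δ2
        have ep : Nat.card {γ : Ω // (x, γ) ∈ pemb α u ∧ (γ, y) ∈ pcol α Δ2} =
            Nat.card {γ' : {z : Ω // z ≠ α} //
              ((⟨x, hx⟩ : {z : Ω // z ≠ α}), γ') ∈ u ∧ γ' ∈ Δ2} := by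
          apply natCard_restrict
          · exact fun γ h => pemb_snd_ne h.1
          · intro γ hγ
            constructor
            · rintro ⟨⟨h1, h2, m1⟩, ⟨⟨h3, m2⟩, -⟩⟩; exact ⟨m1, m2⟩
            · rintro ⟨m1, m2⟩; exact ⟨⟨hx, hγ, m1⟩, ⟨hγ, m2⟩, hy⟩
        have eq2 : Nat.card {γ : Ω // (x2, γ) ∈ pemb α u ∧ (γ, y2) ∈ pcol α Δ2} =
            Nat.card {γ' : {z : Ω // z ≠ α} //
              ((⟨x2, hx2⟩ : {z : Ω // z ≠ α}), γ') ∈ u ∧ γ' ∈ Δ2} := by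
          apply natCard_restrict
          · exact fun γ h => pemb_snd_ne h.1
          · intro γ hγ
            constructor
            · rintro ⟨⟨h1, h2, m1⟩, ⟨⟨h3, m2⟩, -⟩⟩; exact ⟨m1, m2⟩
            · rintro ⟨m1, m2⟩; exact ⟨⟨hx2, hγ, m1⟩, ⟨hγ, m2⟩, hy2⟩
        rw [ep, eq2]
        exact lemB hu hΔ2 hΔ hpΔ hqΔ
      · exact cc0 (fun γ h => pemb_snd_ne h.1 (congrArg Prod.fst h.2))
          (fun γ h => pemb_snd_ne h.1 (congrArg Prod.fst h.2))
    -- r = prow Δ1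
    · exact cc0 (fun γ h => hx h.1.1) (fun γ h => hx2 h.1.1)
    -- r = pcol Δ1
    · rcases hs with ⟨v, hv, rfl⟩ | ⟨Δ2, hΔ2, rfl⟩ | ⟨Δ2, hΔ2, rfl⟩ | rfl
      · exact cc0 (fun γ h => pemb_fst_ne h.2 h.1.2) (fun γ h => pemb_fst_ne h.2 h.1.2)
      · exact cc0 (fun γ h => h.2.2.choose hy) (fun γ h => h.2.2.choose hy2)
      · exact cc0 (fun γ h => h.2.1.choose h.1.2) (fun γ h => h.2.1.choose h.1.2)
      · -- s = {(α,α)}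
        by_cases hm : (⟨x, hx⟩ : {z : Ω // z ≠ α}) ∈ Δ1
        · have hm2 : (⟨x2, hx2⟩ : {z : Ω // z ≠ α}) ∈ Δ1 := by
            have : Δ = Δ1 := fiber_eq hΔ hΔ1 hpΔ hm
            rw [← this]; exact hqΔ
          have e1 : Nat.card {γ : Ω // (x, γ) ∈ pcol α Δ1 ∧ (γ, y) ∈ ({(α, α)} : Set (Ω × Ω))} = 1 := by
            apply natCard_one (a := α)
            intro γ
            constructor
            · rintro ⟨h1, -⟩; exact h1.2
            · rintro rfl
              refine ⟨⟨⟨hx, hm⟩, rfl⟩, ?_⟩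
              rw [Set.mem_singleton_iff, Prod.ext_iff]; exact ⟨rfl, hy⟩
          have e2 : Nat.card {γ : Ω // (x2, γ) ∈ pcol α Δ1 ∧ (γ, y2) ∈ ({(α, α)} : Set (Ω × Ω))} = 1 := by
            apply natCard_one (a := α)
            intro γ
            constructor
            · rintro ⟨h1, -⟩; exact h1.2
            · rintro rfl
              refine ⟨⟨⟨hx2, hm2⟩, rfl⟩, ?_⟩
              rw [Set.mem_singleton_iff, Prod.ext_iff]; exact ⟨rfl, hy2⟩
          exact e1.trans e2.symm
        · refine cc0 (fun γ h => hm h.1.1.choose_spec) (fun γ h => hm ?_)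
          have hm2 : (⟨x2, hx2⟩ : {z : Ω // z ≠ α}) ∈ Δ1 := h.1.1.choose_spec
          have : Δ1 = Δ := fiber_eq hΔ1 hΔ hm2 hqΔ
          rw [this]; exact hpΔ
    -- r = {(α,α)}
    · exact cc0 (fun γ h => hx (congrArg Prod.fst h.1))
        (fun γ h => hx2 (congrArg Prod.fst h.1))
  -- ===================== t = {(α,α)} =====================
  · have hp' : (x, y) = (α, α) := hp
    have hq' : (x2, y2) = (α, α) := hq
    have e1 : x = x2 := (congrArg Prod.fst hp').trans (congrArg Prod.fst hq').symm
    have e2 : y = y2 := (congrArg Prod.snd hp').trans (congrArg Prod.snd hq').symm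
    rw [e1, e2]

end PextCard
section PextMain

variable {Ω : Type*}

/-- The one-point extension coherent configuration. -/
def pext (α : Ω) (Y : CohCfg {x : Ω // x ≠ α}) : CohCfg Ω where
  S := pextS α Y
  nonempty_of_mem := pext_nonempty Y
  exists_unique_mem := pext_unique Y
  diag_of_mem := pext_diag Y
  swap_mem := pext_swap Y
  card_indep := pext_card Y

variable {α : Ω} {Y : CohCfg {x : Ω // x ≠ α}}

lemma pext_fiber_alpha : (pext α Y).fiber {α} := by
  show diagOn {α} ∈ pextS α Y
  have he : diagOn ({α} : Set Ω) = {(α, α)} := by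
    ext p
    constructor
    · rintro ⟨h1, h2⟩
      rw [Set.mem_singleton_iff, Prod.ext_iff]
      exact ⟨h1, h2.symm.trans h1⟩
    · intro h
      have h' : p = (α, α) := h
      exact ⟨congrArg Prod.fst h', (congrArg Prod.fst h').trans (congrArg Prod.snd h').symm⟩
  rw [he]
  exact Or.inr (Or.inr (Or.inr rfl))

lemma pext_fiber_coe {Δ : Set {x : Ω // x ≠ α}} (hΔ : Y.fiber Δ) :
    (pext α Y).fiber {x : Ω | ∃ hx : x ≠ α, (⟨x, hx⟩ : {z : Ω // z ≠ α}) ∈ Δ} := by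
  show diagOn _ ∈ pextS α Y
  refine Or.inl ⟨diagOn Δ, hΔ, ?_⟩
  ext p
  constructor
  · rintro ⟨⟨hx, hm⟩, h2⟩
    exact ⟨hx, h2 ▸ hx, hm, Subtype.ext h2⟩
  · rintro ⟨h1, h2, hm, he⟩
    exact ⟨⟨h1, hm⟩, congrArg Subtype.val he⟩

lemma row_saturate {Z : CohCfg Ω} {r : Set (Ω × Ω)} (hr : r ∈ Z.S)
    (hall : ∀ p ∈ r, p.1 = α) {Δ : Set Ω} (hΔ : Z.fiber Δ) {β β2 : Ω}
    (hβ : β ∈ Δ) (hβ2 : β2 ∈ Δ) (hM : (α, β) ∈ r) : (α, β2) ∈ r := by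
  by_contra hne
  have hcard := Z.card_indep _ (Z.swap_mem r hr) r hr _ hΔ (β, β) ⟨hβ, rfl⟩
    (β2, β2) ⟨hβ2, rfl⟩
  have e1 : Nat.card {γ : Ω // (β, γ) ∈ Prod.swap '' r ∧ (γ, β) ∈ r} = 1 := by
    apply natCard_one (a := α)
    intro γ
    constructor
    · rintro ⟨-, h2⟩; exact hall _ h2
    · rintro rfl; exact ⟨⟨(γ, β), hM, rfl⟩, hM⟩
  have e0 : Nat.card {γ : Ω // (β2, γ) ∈ Prod.swap '' r ∧ (γ, β2) ∈ r} = 0 := by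
    apply natCard_zero
    rintro γ ⟨-, h2⟩
    have hγ : γ = α := hall _ h2
    rw [hγ] at h2
    exact hne h2
  rw [e1, e0] at hcard
  exact one_ne_zero hcard

lemma col_saturate {Z : CohCfg Ω} {r : Set (Ω × Ω)} (hr : r ∈ Z.S)
    (hall : ∀ p ∈ r, p.2 = α) {Δ : Set Ω} (hΔ : Z.fiber Δ) {β β2 : Ω}
    (hβ : β ∈ Δ) (hβ2 : β2 ∈ Δ) (hM : (β, α) ∈ r) : (β2, α) ∈ r := by
  by_contra hne
  have hcard := Z.card_indep r hr _ (Z.swap_mem r hr) _ hΔ (β, β) ⟨hβ, rfl⟩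
    (β2, β2) ⟨hβ2, rfl⟩
  have e1 : Nat.card {γ : Ω // (β, γ) ∈ r ∧ (γ, β) ∈ Prod.swap '' r} = 1 := by
    apply natCard_one (a := α)
    intro γ
    constructor
    · rintro ⟨h1, -⟩; exact hall _ h1
    · rintro rfl; exact ⟨hM, ⟨(β, γ), hM, rfl⟩⟩
  have e0 : Nat.card {γ : Ω // (β2, γ) ∈ r ∧ (γ, β2) ∈ Prod.swap '' r} = 0 := by
    apply natCard_zero
    rintro γ ⟨h1, -⟩
    have hγ : γ = α := hall _ h1
    rw [hγ] at h1
    exact hne h1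
  rw [e1, e0] at hcard
  exact one_ne_zero hcard

lemma fiber_sub {Xα : CohCfg Ω} {X' : CohCfg {x : Ω // x ≠ α}}
    (hX' : X'.S = {u : Set ({x : Ω // x ≠ α} × {x : Ω // x ≠ α}) | u.Nonempty ∧
      ∃ r ∈ Xα.S, u = {p | ((p.1 : Ω), (p.2 : Ω)) ∈ r}})
    {Y' : CohCfg {x : Ω // x ≠ α}} (hY' : X'.IsFission Y')
    {Δ' : Set {x : Ω // x ≠ α}} (hΔ' : Y'.fiber Δ') :
    ∃ Δ : Set Ω, Xα.fiber Δ ∧ ∀ y ∈ Δ', (y : Ω) ∈ Δ := by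
  obtain ⟨y0, hy0⟩ := fiber_nonempty hΔ'
  obtain ⟨Δ, hΔ, hy0Δ⟩ := exists_fiber Xα (y0 : Ω)
  refine ⟨Δ, hΔ, ?_⟩
  have hΔp : diagOn {y : {x : Ω // x ≠ α} | (y : Ω) ∈ Δ} ∈ X'.S := by
    rw [hX']
    refine ⟨⟨(y0, y0), hy0Δ, rfl⟩, diagOn Δ, hΔ, ?_⟩
    ext p
    constructor
    · rintro ⟨h1, h2⟩
      exact ⟨h1, congrArg Subtype.val h2⟩
    · rintro ⟨h1, h2⟩
      exact ⟨h1, Subtype.ext h2⟩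
  obtain ⟨F, hF, hU⟩ := hY' _ (rel_of_mem hΔp)
  have hy00 : (y0, y0) ∈ ⋃₀ F := by
    rw [← hU]; exact ⟨hy0Δ, rfl⟩
  obtain ⟨f, hfF, hyf⟩ := hy00
  have hfe : f = diagOn Δ' := class_eq (hF hfF) hΔ' hyf ⟨hy0, rfl⟩
  intro y hy
  have hm : (y, y) ∈ ⋃₀ F := ⟨f, hfF, by rw [hfe]; exact ⟨hy, rfl⟩⟩
  rw [← hU] at hm
  exact hm.1

lemma pext_fission {Xα : CohCfg Ω} (hfib : Xα.fiber {α})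
    {X' : CohCfg {x : Ω // x ≠ α}}
    (hX' : X'.S = {u : Set ({x : Ω // x ≠ α} × {x : Ω // x ≠ α}) | u.Nonempty ∧
      ∃ r ∈ Xα.S, u = {p | ((p.1 : Ω), (p.2 : Ω)) ∈ r}})
    {Y' : CohCfg {x : Ω // x ≠ α}} (hY' : X'.IsFission Y') :
    Xα.IsFission (pext α Y') := by
  intro v hv
  obtain ⟨T, hT, rfl⟩ := hv
  apply rel_sUnion
  intro r hrT
  have hr := hT hrT
  have hfst := support_fst hr hfib
  have hsnd := support_snd hr hfib
  rcases hfst with hf | hf <;> rcases hsnd with hg | hg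
  · -- r = {(α,α)}
    have he : r = {(α, α)} := by
      obtain ⟨p0, hp0⟩ := Xα.nonempty_of_mem r hr
      apply subset_antisymm
      · intro p hp
        rw [Set.mem_singleton_iff, Prod.ext_iff]
        exact ⟨hf p hp, hg p hp⟩
      · intro p hp
        rw [Set.mem_singleton_iff] at hp
        have h0 : p0 = (α, α) := by rw [Prod.ext_iff]; exact ⟨hf p0 hp0, hg p0 hp0⟩
        rw [hp, ← h0]
        exact hp0
    rw [he]
    exact rel_of_mem (Or.inr (Or.inr (Or.inr rfl)))
  · -- r is a row
    have hre : r = prow α {y : {x : Ω // x ≠ α} | (α, (y : Ω)) ∈ r} := by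
      ext p
      constructor
      · intro hp
        refine ⟨hf p hp, hg p hp, ?_⟩
        show (α, p.2) ∈ r
        have he : p = (α, p.2) := by rw [Prod.ext_iff]; exact ⟨hf p hp, rfl⟩
        rwa [← he]
      · rintro ⟨h1, h2, hm⟩
        have he : p = (α, p.2) := by rw [Prod.ext_iff]; exact ⟨h1, rfl⟩
        rw [he]
        exact hm
    set M : Set {x : Ω // x ≠ α} := {y : {x : Ω // x ≠ α} | (α, (y : Ω)) ∈ r} with hMdef
    have key : ∀ Δ', Y'.fiber Δ' → ∀ y0 ∈ Δ', y0 ∈ M → ∀ y ∈ Δ', y ∈ M := by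
      intro Δ' hΔ' y0 hy0 hy0M y hy
      obtain ⟨Δb, hΔb, hsub⟩ := fiber_sub hX' hY' hΔ'
      exact row_saturate hr hf hΔb (hsub y0 hy0) (hsub y hy) hy0M
    rw [hre]
    refine ⟨{v | ∃ Δ', Y'.fiber Δ' ∧ Δ' ⊆ M ∧ v = prow α Δ'}, ?_, ?_⟩
    · rintro v ⟨Δ', hΔ', -, rfl⟩
      exact Or.inr (Or.inl ⟨Δ', hΔ', rfl⟩)
    · apply subset_antisymm
      · rintro p ⟨h1, h2, hm⟩
        obtain ⟨Δ', hΔ', hyΔ'⟩ := exists_fiber Y' ⟨p.2, h2⟩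
        exact ⟨prow α Δ', ⟨Δ', hΔ', fun z hz => key Δ' hΔ' _ hyΔ' hm z hz, rfl⟩,
          h1, h2, hyΔ'⟩
      · rintro p ⟨v, ⟨Δ', hΔ', hsub, rfl⟩, h1, h2, hm⟩
        exact ⟨h1, h2, hsub hm⟩
  · -- r is a column
    have hre : r = pcol α {y : {x : Ω // x ≠ α} | ((y : Ω), α) ∈ r} := by
      ext p
      constructor
      · intro hp
        refine ⟨⟨hf p hp, ?_⟩, hg p hp⟩
        show (p.1, α) ∈ r
        have he : p = (p.1, α) := by rw [Prod.ext_iff]; exact ⟨rfl, hg p hp⟩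
        rwa [← he]
      · rintro ⟨⟨h1, hm⟩, h2⟩
        have he : p = (p.1, α) := by rw [Prod.ext_iff]; exact ⟨rfl, h2⟩
        rw [he]
        exact hm
    set M : Set {x : Ω // x ≠ α} := {y : {x : Ω // x ≠ α} | ((y : Ω), α) ∈ r} with hMdef
    have key : ∀ Δ', Y'.fiber Δ' → ∀ y0 ∈ Δ', y0 ∈ M → ∀ y ∈ Δ', y ∈ M := by
      intro Δ' hΔ' y0 hy0 hy0M y hy
      obtain ⟨Δb, hΔb, hsub⟩ := fiber_sub hX' hY' hΔ'
      exact col_saturate hr hg hΔb (hsub y0 hy0) (hsub y hy) hy0M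
    rw [hre]
    refine ⟨{v | ∃ Δ', Y'.fiber Δ' ∧ Δ' ⊆ M ∧ v = pcol α Δ'}, ?_, ?_⟩
    · rintro v ⟨Δ', hΔ', -, rfl⟩
      exact Or.inr (Or.inr (Or.inl ⟨Δ', hΔ', rfl⟩))
    · apply subset_antisymm
      · rintro p ⟨⟨h1, hm⟩, h2⟩
        obtain ⟨Δ', hΔ', hyΔ'⟩ := exists_fiber Y' ⟨p.1, h1⟩
        exact ⟨pcol α Δ', ⟨Δ', hΔ', fun z hz => key Δ' hΔ' _ hyΔ' hm z hz, rfl⟩,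
          ⟨h1, hyΔ'⟩, h2⟩
      · rintro p ⟨v, ⟨Δ', hΔ', hsub, rfl⟩, ⟨h1, hm⟩, h2⟩
        exact ⟨⟨h1, hsub hm⟩, h2⟩
  · -- r avoids α entirely
    have hr'S : {p : {x : Ω // x ≠ α} × {x : Ω // x ≠ α} | ((p.1 : Ω), (p.2 : Ω)) ∈ r}
        ∈ X'.S := by
      rw [hX']
      refine ⟨?_, r, hr, rfl⟩
      obtain ⟨p0, hp0⟩ := Xα.nonempty_of_mem r hr
      exact ⟨(⟨p0.1, hf p0 hp0⟩, ⟨p0.2, hg p0 hp0⟩), hp0⟩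
    obtain ⟨F, hF, hFe⟩ := hY' _ (rel_of_mem hr'S)
    have he : r = pemb α {p : {x : Ω // x ≠ α} × {x : Ω // x ≠ α} | ((p.1 : Ω), (p.2 : Ω)) ∈ r} := by
      ext p
      constructor
      · intro hp
        exact ⟨hf p hp, hg p hp, hp⟩
      · rintro ⟨h1, h2, hm⟩
        exact hm
    rw [he, hFe, pemb_sUnion]
    apply rel_sUnion
    rintro v ⟨f, hfF, rfl⟩
    exact rel_of_mem (Or.inl ⟨f, hF hfF, rfl⟩)

end PextMain

/-- **Lemma (170311z).** If `Π` is a generalized base of `X` and `α ∈ Ω`, then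
`{Γ \ {α} : Γ ∈ Π}` is a generalized base of the restriction of `X_α` to `Ω \ {α}`. -/
theorem stmt_8 {Ω : Type*} [Fintype Ω] (X : CohCfg Ω) (P : Set (Set Ω))
    (hP : X.IsGenBase P) (α : Ω)
    (Xα : CohCfg Ω) (hXα : X.SmallestFissionAt Xα α)
    (X' : CohCfg {x : Ω // x ≠ α})
    (hX' : X'.S = {u : Set ({x : Ω // x ≠ α} × {x : Ω // x ≠ α}) | u.Nonempty ∧
      ∃ r ∈ Xα.S, u = {p | ((p.1 : Ω), (p.2 : Ω)) ∈ r}}) :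
    X'.IsGenBase {D | ∃ Γ ∈ P, D = {y : {x : Ω // x ≠ α} | (y : Ω) ∈ Γ}} := by
  intro Y' hfis hUF
  have hYfis : X.IsFission (pext α Y') :=
    fun u hu => pext_fission hXα.2.1 hX' hfis u (hXα.1 u hu)
  have hYUF : ∀ Γ ∈ P, (pext α Y').unionFibers Γ := by
    intro Γ hΓ
    obtain ⟨F, hF, hDe⟩ := hUF {y : {x : Ω // x ≠ α} | (y : Ω) ∈ Γ} ⟨Γ, hΓ, rfl⟩
    refine ⟨{v : Set Ω | (∃ Δ ∈ F, v = {x : Ω | ∃ hx : x ≠ α,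
      (⟨x, hx⟩ : {z : Ω // z ≠ α}) ∈ Δ}) ∨ (α ∈ Γ ∧ v = {α})}, ?_, ?_⟩
    · rintro v (⟨Δ, hΔF, rfl⟩ | ⟨-, rfl⟩)
      · exact pext_fiber_coe (hF hΔF)
      · exact pext_fiber_alpha
    · apply subset_antisymm
      · intro x hx
        by_cases hxa : x = α
        · exact ⟨{α}, Or.inr ⟨hxa ▸ hx, rfl⟩, hxa⟩
        · have hm : (⟨x, hxa⟩ : {z : Ω // z ≠ α}) ∈ ⋃₀ F := by
            rw [← hDe]; exact hx
          obtain ⟨Δ, hΔF, hmd⟩ := hm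
          exact ⟨_, Or.inl ⟨Δ, hΔF, rfl⟩, hxa, hmd⟩
      · rintro x ⟨v, (⟨Δ, hΔF, rfl⟩ | ⟨hαΓ, rfl⟩), hxv⟩
        · obtain ⟨hx, hmd⟩ := hxv
          have hm : (⟨x, hx⟩ : {z : Ω // z ≠ α}) ∈ ⋃₀ F := ⟨Δ, hΔF, hmd⟩
          rw [← hDe] at hm
          exact hm
        · rw [Set.mem_singleton_iff] at hxv
          rw [hxv]
          exact hαΓ
  have hYc := hP _ hYfis hYUF
  intro p
  have hsing : {((p.1 : Ω), (p.2 : Ω))} ∈ pextS α Y' := hYc ((p.1 : Ω), (p.2 : Ω))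
  rcases hsing with ⟨u, huS, hequ⟩ | ⟨Δ, -, heq⟩ | ⟨Δ, -, heq⟩ | heq
  · have hmem : ((p.1 : Ω), (p.2 : Ω)) ∈ pemb α u := by rw [← hequ]; rfl
    have hpu : p ∈ u := mem_pemb_coe.1 hmem
    have hue : u = {p} := by
      apply subset_antisymm
      · intro q hq
        have hq2 : ((q.1 : Ω), (q.2 : Ω)) ∈ pemb α u := mem_pemb_coe.2 hq
        rw [← hequ, Set.mem_singleton_iff, Prod.ext_iff] at hq2
        rw [Set.mem_singleton_iff, Prod.ext_iff]
        exact ⟨Subtype.ext hq2.1, Subtype.ext hq2.2⟩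
      · intro q hq
        rw [Set.mem_singleton_iff] at hq
        rw [hq]
        exact hpu
    rw [← hue]
    exact huS
  · have hmem : ((p.1 : Ω), (p.2 : Ω)) ∈ prow α Δ := by rw [← heq]; rfl
    exact absurd hmem.1 p.1.2
  · have hmem : ((p.1 : Ω), (p.2 : Ω)) ∈ pcol α Δ := by rw [← heq]; rfl
    exact absurd hmem.2 p.2.2
  · have hmem : ((p.1 : Ω), (p.2 : Ω)) ∈ ({(α, α)} : Set (Ω × Ω)) := by rw [← heq]; rfl
    exact absurd (congrArg Prod.fst hmem) p.1.2
end

section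
/- Let X = X1 ≀ X2 be the wreath product of coherent configurations X1 on Ω1 and X2 on Ω2, with point set Ω = Ω1 × Ω2, and let Π be a family of subsets of Ω. Suppose that (1) for every α ∈ Ω2 the family {Γ ∩ Ω_α : Γ ∈ Π} is a generalized base of the restriction X_{Ω_α}, where Ω_α = Ω1 × {α}, and (2) the family {Γ^π : Γ ∈ Π} of projections to Ω2 is a generalized base of X2, where π : Ω → Ω2 is the natural projection. Then Π is a generalized base of X. -/
open Set

namespace WreathAux

variable {Ω : Type*}

lemma basic_unique (X : CohCfg Ω) {r r' : Set (Ω × Ω)} (hr : r ∈ X.S) (hr' : r' ∈ X.S)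
    {p : Ω × Ω} (h : p ∈ r) (h' : p ∈ r') : r = r' := by
  obtain ⟨u, -, hu⟩ := X.exists_unique_mem p
  rw [hu r ⟨hr, h⟩, hu r' ⟨hr', h'⟩]

lemma rel_iff (X : CohCfg Ω) (u : Set (Ω × Ω)) :
    X.rel u ↔ ∀ p ∈ u, ∀ r ∈ X.S, p ∈ r → r ⊆ u := by
  constructor
  · rintro ⟨T, hT, rfl⟩ p hp r hr hpr
    obtain ⟨r', hr'T, hpr'⟩ := hp
    rw [basic_unique X hr (hT hr'T) hpr hpr']
    exact Set.subset_sUnion_of_mem hr'T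
  · intro h
    refine ⟨{r | r ∈ X.S ∧ ∃ p ∈ u, p ∈ r}, fun r hr => hr.1, ?_⟩
    apply Set.Subset.antisymm
    · intro p hp
      obtain ⟨r, ⟨hr, hpr⟩, -⟩ := X.exists_unique_mem p
      exact ⟨r, ⟨hr, p, hp, hpr⟩, hpr⟩
    · rintro p ⟨r, ⟨hr, q, hq, hqr⟩, hpr⟩
      exact h q hq r hr hqr hpr

lemma rel_basic (X : CohCfg Ω) {r : Set (Ω × Ω)} (hr : r ∈ X.S) : X.rel r :=
  ⟨{r}, by simpa, by simp⟩

lemma witness_transfer [Finite Ω] (X : CohCfg Ω) {r s t : Set (Ω × Ω)}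
    (hr : r ∈ X.S) (hs : s ∈ X.S) (ht : t ∈ X.S) {p q : Ω × Ω}
    (hp : p ∈ t) (hq : q ∈ t) (h : ∃ γ, (p.1, γ) ∈ r ∧ (γ, p.2) ∈ s) :
    ∃ γ, (q.1, γ) ∈ r ∧ (γ, q.2) ∈ s := by
  have hc := X.card_indep r hr s hs t ht p hp q hq
  by_contra hn
  have he : IsEmpty {γ : Ω // (q.1, γ) ∈ r ∧ (γ, q.2) ∈ s} :=
    ⟨fun ⟨γ, hγ⟩ => hn ⟨γ, hγ⟩⟩
  have hq0 : Nat.card {γ : Ω // (q.1, γ) ∈ r ∧ (γ, q.2) ∈ s} = 0 :=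
    @Nat.card_of_isEmpty _ he
  have hne : Nonempty {γ : Ω // (p.1, γ) ∈ r ∧ (γ, p.2) ∈ s} := by
    obtain ⟨γ, hγ⟩ := h; exact ⟨⟨γ, hγ⟩⟩
  have := Nat.card_pos (α := {γ : Ω // (p.1, γ) ∈ r ∧ (γ, p.2) ∈ s})
  omega

lemma rel_compo [Finite Ω] (X : CohCfg Ω) {u v : Set (Ω × Ω)}
    (hu : X.rel u) (hv : X.rel v) : X.rel (compoRel u v) := by
  rw [rel_iff]
  rintro p ⟨γ, h1, h2⟩ t ht hpt q hqt
  obtain ⟨r, ⟨hr, h1r⟩, -⟩ := X.exists_unique_mem (p.1, γ)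
  obtain ⟨s, ⟨hs, h2s⟩, -⟩ := X.exists_unique_mem (γ, p.2)
  obtain ⟨γ', hγ1, hγ2⟩ := witness_transfer X hr hs ht hpt hqt ⟨γ, h1r, h2s⟩
  exact ⟨γ', (rel_iff X u).1 hu _ h1 r hr h1r hγ1, (rel_iff X v).1 hv _ h2 s hs h2s hγ2⟩

noncomputable def bas (X : CohCfg Ω) (p : Ω × Ω) : Set (Ω × Ω) :=
  (X.exists_unique_mem p).choose

lemma bas_mem (X : CohCfg Ω) (p : Ω × Ω) : bas X p ∈ X.S :=
  (X.exists_unique_mem p).choose_spec.1.1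

lemma mem_bas (X : CohCfg Ω) (p : Ω × Ω) : p ∈ bas X p :=
  (X.exists_unique_mem p).choose_spec.1.2

lemma bas_eq (X : CohCfg Ω) {r : Set (Ω × Ω)} {p : Ω × Ω} (hr : r ∈ X.S) (h : p ∈ r) :
    bas X p = r := basic_unique X (bas_mem X p) hr (mem_bas X p) h

end WreathAux
namespace WreathAux

open Classical

variable {Ω : Type*}

lemma natcard_set {Ω' : Type*} [Finite Ω'] (s : Set Ω') :
    Nat.card s = (Set.toFinite s).toFinset.card := by
  rw [Nat.card_coe_set_eq, Set.ncard_eq_toFinset_card s (Set.toFinite s)]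

/-- The finite index set of pairs of basic relations inside `U` and `V`. -/
noncomputable def pairIdx [Finite Ω] (X : CohCfg Ω) (U V : Set (Ω × Ω)) :
    Finset (Set (Ω × Ω) × Set (Ω × Ω)) :=
  (Set.toFinite {rs : Set (Ω × Ω) × Set (Ω × Ω) |
    rs.1 ∈ X.S ∧ rs.2 ∈ X.S ∧ rs.1 ⊆ U ∧ rs.2 ⊆ V}).toFinset

lemma compo_card_sum [Finite Ω] (X : CohCfg Ω) {U V : Set (Ω × Ω)}
    (hU : X.rel U) (hV : X.rel V) (P : Ω × Ω) :
    Nat.card {c : Ω // (P.1, c) ∈ U ∧ (c, P.2) ∈ V} =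
    ∑ rs ∈ pairIdx X U V, Nat.card {c : Ω // (P.1, c) ∈ rs.1 ∧ (c, P.2) ∈ rs.2} := by
  rw [show {c : Ω // (P.1, c) ∈ U ∧ (c, P.2) ∈ V} = ↥{c : Ω | (P.1, c) ∈ U ∧ (c, P.2) ∈ V}
    from rfl, natcard_set]
  rw [Finset.card_eq_sum_card_fiberwise
    (f := fun c => ((bas X (P.1, c), bas X (c, P.2)) : Set (Ω × Ω) × Set (Ω × Ω)))
    (t := pairIdx X U V)]
  · apply Finset.sum_congr rfl
    intro rs hrs
    rw [show {c : Ω // (P.1, c) ∈ rs.1 ∧ (c, P.2) ∈ rs.2}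
      = ↥{c : Ω | (P.1, c) ∈ rs.1 ∧ (c, P.2) ∈ rs.2} from rfl, natcard_set]
    rw [pairIdx, Set.Finite.mem_toFinset] at hrs
    congr 1
    ext c
    simp only [Finset.mem_filter, Set.Finite.mem_toFinset, Set.mem_setOf_eq]
    constructor
    · rintro ⟨-, heq⟩
      exact ⟨by rw [← heq]; exact mem_bas X (P.1, c), by rw [← heq]; exact mem_bas X (c, P.2)⟩
    · rintro ⟨h1, h2⟩
      refine ⟨⟨hrs.2.2.1 h1, hrs.2.2.2 h2⟩, ?_⟩
      have e1 := bas_eq X hrs.1 h1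
      have e2 := bas_eq X hrs.2.1 h2
      rw [Prod.ext_iff]
      exact ⟨e1, e2⟩
  · intro c hc
    rw [Finset.mem_coe, Set.Finite.mem_toFinset] at hc
    rw [Finset.mem_coe, pairIdx, Set.Finite.mem_toFinset]
    exact ⟨bas_mem X _, bas_mem X _,
      (rel_iff X U).1 hU _ hc.1 _ (bas_mem X _) (mem_bas X _),
      (rel_iff X V).1 hV _ hc.2 _ (bas_mem X _) (mem_bas X _)⟩

lemma compo_card_indep [Finite Ω] (X : CohCfg Ω) {U V t : Set (Ω × Ω)}
    (hU : X.rel U) (hV : X.rel V) (ht : t ∈ X.S) {P Q : Ω × Ω}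
    (hP : P ∈ t) (hQ : Q ∈ t) :
    Nat.card {c : Ω // (P.1, c) ∈ U ∧ (c, P.2) ∈ V} =
    Nat.card {c : Ω // (Q.1, c) ∈ U ∧ (c, Q.2) ∈ V} := by
  rw [compo_card_sum X hU hV P, compo_card_sum X hU hV Q]
  apply Finset.sum_congr rfl
  intro rs hrs
  rw [pairIdx, Set.Finite.mem_toFinset] at hrs
  exact X.card_indep rs.1 hrs.1 rs.2 hrs.2.1 t ht P hP Q hQ

lemma card_prod_snd {Ω1 Ω2 : Type*} (pred : Ω2 → Prop) :
    Nat.card {c : Ω1 × Ω2 // pred c.2} = Nat.card Ω1 * Nat.card {γ : Ω2 // pred γ} := by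
  rw [← Nat.card_prod]
  exact Nat.card_congr ⟨fun c => (c.1.1, ⟨c.1.2, c.2⟩), fun x => ⟨(x.1, x.2.1), x.2.2⟩,
    fun ⟨⟨a, b⟩, h⟩ => rfl, fun ⟨a, ⟨b, h⟩⟩ => rfl⟩

end WreathAux
namespace WreathAux

variable {Ω1 Ω2 : Type*}

/-- The trace of a relation on the block `Ω1 × {α}`. -/
def trA (α : Ω2) (r : Set ((Ω1 × Ω2) × (Ω1 × Ω2))) : Set (Ω1 × Ω1) :=
  {q | ((q.1, α), (q.2, α)) ∈ r}

/-- The projection of a relation to `Ω2 × Ω2`. -/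
def projQ (r : Set ((Ω1 × Ω2) × (Ω1 × Ω2))) : Set (Ω2 × Ω2) :=
  {q | ∃ x y : Ω1, ((x, q.1), (y, q.2)) ∈ r}

/-- The block-wise lift of the projection of `r`. -/
def Rlift (r : Set ((Ω1 × Ω2) × (Ω1 × Ω2))) : Set ((Ω1 × Ω2) × (Ω1 × Ω2)) :=
  {p | (p.1.2, p.2.2) ∈ projQ r}

lemma rel_Rlift [Finite Ω1] [Finite Ω2] (X' : CohCfg (Ω1 × Ω2))
    (he : X'.rel (wreathE Ω1 Ω2)) {r : Set ((Ω1 × Ω2) × (Ω1 × Ω2))} (hr : X'.rel r) :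
    X'.rel (Rlift r) := by
  have hE : Rlift r = compoRel (compoRel (wreathE Ω1 Ω2) r) (wreathE Ω1 Ω2) := by
    ext p
    constructor
    · rintro ⟨x, y, hxy⟩
      exact ⟨(y, p.2.2), ⟨(x, p.1.2), rfl, hxy⟩, rfl⟩
    · rintro ⟨b, ⟨a, ha, hab⟩, hb⟩
      refine ⟨a.1, b.1, ?_⟩
      have ea : (a.1, p.1.2) = a := by
        rw [show p.1.2 = a.2 from ha]
      have eb : (b.1, p.2.2) = b := by
        rw [← (show (b.2 : Ω2) = p.2.2 from hb)]
      rw [ea, eb]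
      exact hab
  rw [hE]
  exact rel_compo X' (rel_compo X' he hr) he

lemma projQ_eq [Finite Ω1] [Finite Ω2] (X' : CohCfg (Ω1 × Ω2))
    (he : X'.rel (wreathE Ω1 Ω2)) {r s : Set ((Ω1 × Ω2) × (Ω1 × Ω2))}
    (hr : r ∈ X'.S) (hs : s ∈ X'.S)
    (h : (projQ r ∩ projQ s).Nonempty) : projQ r = projQ s := by
  obtain ⟨⟨α, β⟩, h1, h2⟩ := h
  obtain ⟨x, y, hxy⟩ := h2
  obtain ⟨x', y', hxy'⟩ := h1
  have hsub : ∀ {r' s' : Set ((Ω1 × Ω2) × (Ω1 × Ω2))}, r' ∈ X'.S → s' ∈ X'.S →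
      (∀ {x y : Ω1}, ((x, α), (y, β)) ∈ s' → ((α, β) : Ω2 × Ω2) ∈ projQ r') →
      (∃ x y : Ω1, ((x, α), (y, β)) ∈ s') → projQ s' ⊆ projQ r' := by
    intro r' s' hr' hs' hmem ⟨x0, y0, h0⟩
    have hs'sub : s' ⊆ Rlift r' :=
      (rel_iff X' (Rlift r')).1 (rel_Rlift X' he (rel_basic X' hr'))
        ((x0, α), (y0, β)) (hmem h0) s' hs' h0
    rintro ⟨γ, δ⟩ ⟨u, v, huv⟩
    exact hs'sub huv
  refine Set.Subset.antisymm ?_ ?_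
  · exact hsub hs hr (fun _ => ⟨x, y, hxy⟩) ⟨x', y', hxy'⟩
  · exact hsub hr hs (fun _ => ⟨x', y', hxy'⟩) ⟨x, y, hxy⟩

end WreathAux
namespace WreathAux

variable {Ω1 Ω2 : Type*}

lemma exists_restr [Finite Ω1] [Finite Ω2] (X' : CohCfg (Ω1 × Ω2)) (α : Ω2)
    (hblock : ∀ r ∈ X'.S, (∃ p ∈ r, p.1.2 = p.2.2) → r ⊆ wreathE Ω1 Ω2) :
    ∃ Y1 : CohCfg Ω1,
      Y1.S = {u : Set (Ω1 × Ω1) | u.Nonempty ∧ ∃ r ∈ X'.S, u = trA α r} := by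
  have key : ∀ {r s : Set ((Ω1 × Ω2) × (Ω1 × Ω2))}, r ⊆ wreathE Ω1 Ω2 →
      s ⊆ wreathE Ω1 Ω2 → ∀ (z1 z2 : Ω1),
      Nat.card {c : Ω1 × Ω2 // ((z1, α), c) ∈ r ∧ (c, (z2, α)) ∈ s} =
      Nat.card {γ1 : Ω1 // (z1, γ1) ∈ trA α r ∧ (γ1, z2) ∈ trA α s} := by
    intro r s hrw hsw z1 z2
    have hα : ∀ c : Ω1 × Ω2, ((z1, α), c) ∈ r → c = (c.1, α) := by
      intro c h1
      have h2 : α = c.2 := hrw h1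
      exact Prod.ext rfl h2.symm
    apply Nat.card_congr
    refine ⟨fun c => ⟨c.1.1, ?_, ?_⟩, fun γ1 => ⟨(γ1.1, α), γ1.2.1, γ1.2.2⟩,
      fun c => Subtype.ext (hα c.1 c.2.1).symm, fun γ1 => Subtype.ext rfl⟩
    · have e := hα c.1 c.2.1
      show ((z1, α), (c.1.1, α)) ∈ r
      rw [← e]
      exact c.2.1
    · have e := hα c.1 c.2.1
      show ((c.1.1, α), (z2, α)) ∈ s
      rw [← e]
      exact c.2.2
  refine ⟨⟨{u | u.Nonempty ∧ ∃ r ∈ X'.S, u = trA α r}, ?_, ?_, ?_, ?_, ?_⟩, rfl⟩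
  · rintro u ⟨hne, -⟩
    exact hne
  · intro p
    obtain ⟨r, ⟨hr, hpr⟩, -⟩ := X'.exists_unique_mem ((p.1, α), (p.2, α))
    refine ⟨trA α r, ⟨⟨⟨p, hpr⟩, r, hr, rfl⟩, hpr⟩, ?_⟩
    rintro u' ⟨⟨hne', r', hr', rfl⟩, hp'⟩
    rw [basic_unique X' hr' hr hp' hpr]
  · rintro u ⟨hne, r, hr, rfl⟩ p hp hpd q hq
    have hd := X'.diag_of_mem r hr _ hp (by show (p.1, α) = (p.2, α); rw [hpd]) _ hq
    exact congrArg Prod.fst hd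
  · rintro u ⟨hne, r, hr, rfl⟩
    refine ⟨?_, Prod.swap '' r, X'.swap_mem r hr, ?_⟩
    · obtain ⟨q, hq⟩ := hne
      exact ⟨Prod.swap q, q, hq, rfl⟩
    · ext q
      rw [Set.image_swap_eq_preimage_swap]
      constructor
      · intro h
        exact ⟨((q.2, α), (q.1, α)), h, rfl⟩
      · rintro ⟨z, hz, hzq⟩
        show ((q.2, α), (q.1, α)) ∈ r
        have h1 : z.2 = (q.1, α) := congrArg Prod.fst hzq
        have h2 : z.1 = (q.2, α) := congrArg Prod.snd hzq
        rw [← h1, ← h2]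
        exact hz
  · rintro u ⟨⟨pr, hpr⟩, r, hr, rfl⟩ v ⟨⟨ps, hps⟩, s, hs, rfl⟩ w ⟨hnew, t, ht, rfl⟩ p hp q hq
    have hrw : r ⊆ wreathE Ω1 Ω2 := hblock r hr ⟨((pr.1, α), (pr.2, α)), hpr, rfl⟩
    have hsw : s ⊆ wreathE Ω1 Ω2 := hblock s hs ⟨((ps.1, α), (ps.2, α)), hps, rfl⟩
    rw [← key hrw hsw p.1 p.2, ← key hrw hsw q.1 q.2]
    exact X'.card_indep r hr s hs t ht ((p.1, α), (p.2, α)) hp ((q.1, α), (q.2, α)) hq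

end WreathAux
namespace WreathAux

variable {Ω1 Ω2 : Type*}

lemma exists_quot [Finite Ω1] [Finite Ω2] [Nonempty Ω1] (X' : CohCfg (Ω1 × Ω2))
    (he : X'.rel (wreathE Ω1 Ω2)) :
    ∃ Y2 : CohCfg Ω2, Y2.S = {v : Set (Ω2 × Ω2) | ∃ r ∈ X'.S, v = projQ r} := by
  have hblock : ∀ r ∈ X'.S, (∃ p ∈ r, p.1.2 = p.2.2) → r ⊆ wreathE Ω1 Ω2 := by
    rintro r hr ⟨p, hp, hpd⟩
    exact (rel_iff X' _).1 he p hpd r hr hp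
  refine ⟨⟨{v | ∃ r ∈ X'.S, v = projQ r}, ?_, ?_, ?_, ?_, ?_⟩, rfl⟩
  · rintro v ⟨r, hr, rfl⟩
    obtain ⟨p, hp⟩ := X'.nonempty_of_mem r hr
    exact ⟨(p.1.2, p.2.2), p.1.1, p.2.1, hp⟩
  · intro p
    obtain ⟨x⟩ := (inferInstance : Nonempty Ω1)
    obtain ⟨r, ⟨hr, hPr⟩, -⟩ := X'.exists_unique_mem ((x, p.1), (x, p.2))
    refine ⟨projQ r, ⟨⟨r, hr, rfl⟩, x, x, hPr⟩, ?_⟩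
    rintro v' ⟨⟨r', hr', rfl⟩, hp'⟩
    exact projQ_eq X' he hr' hr ⟨p, hp', x, x, hPr⟩
  · rintro v ⟨r, hr, rfl⟩ p hp hpd q hq
    obtain ⟨x, y, hxy⟩ := hp
    have hrsub : r ⊆ wreathE Ω1 Ω2 :=
      hblock r hr ⟨((x, p.1), (y, p.2)), hxy, by show p.1 = p.2; exact hpd⟩
    obtain ⟨x', y', hq'⟩ := hq
    exact hrsub hq'
  · rintro v ⟨r, hr, rfl⟩
    refine ⟨Prod.swap '' r, X'.swap_mem r hr, ?_⟩
    rw [Set.image_swap_eq_preimage_swap, Set.image_swap_eq_preimage_swap]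
    ext q
    constructor
    · rintro ⟨x, y, h⟩
      exact ⟨y, x, h⟩
    · rintro ⟨x, y, h⟩
      exact ⟨y, x, h⟩
  · rintro v ⟨r, hr, rfl⟩ w ⟨s, hs, rfl⟩ z ⟨t, ht, rfl⟩ p hp q hq
    obtain ⟨x, y, hP⟩ := hp
    obtain ⟨x', y', hQ⟩ := hq
    have key : ∀ (z1 z2 : Ω2) (a b : Ω1),
        Nat.card {c : Ω1 × Ω2 // (((a, z1), c) ∈ Rlift r) ∧ ((c, (b, z2)) ∈ Rlift s)} =
        Nat.card Ω1 * Nat.card {γ : Ω2 // (z1, γ) ∈ projQ r ∧ (γ, z2) ∈ projQ s} := by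
      intro z1 z2 a b
      rw [← card_prod_snd (fun γ => (z1, γ) ∈ projQ r ∧ (γ, z2) ∈ projQ s)]
      rfl
    have h2 := compo_card_indep X' (rel_Rlift X' he (rel_basic X' hr))
      (rel_Rlift X' he (rel_basic X' hs)) ht hP hQ
    have h2' : Nat.card {c : Ω1 × Ω2 // (((x, p.1), c) ∈ Rlift r) ∧ ((c, (y, p.2)) ∈ Rlift s)}
        = Nat.card {c : Ω1 × Ω2 // (((x', q.1), c) ∈ Rlift r) ∧ ((c, (y', q.2)) ∈ Rlift s)} :=
      h2
    rw [key p.1 p.2 x y, key q.1 q.2 x' y'] at h2'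
    exact Nat.eq_of_mul_eq_mul_left Nat.card_pos h2'

end WreathAux

open WreathAux in
/-- **Lemma (220711a).** Let `X = X1 ≀ X2` and `Π` a family of subsets of `Ω1 × Ω2`.
If for every `α ∈ Ω2` the traces `{Γ ∩ Ω_α : Γ ∈ Π}` form a generalized base of the
restriction `X_{Ω_α}` (identified with `X1` via the projection), and the projections
`{Γ^π : Γ ∈ Π}` form a generalized base of `X2`, then `Π` is a generalized base of `X`. -/
theorem stmt_9 {Ω1 Ω2 : Type*} [Fintype Ω1] [Fintype Ω2]
    (X1 : CohCfg Ω1) (X2 : CohCfg Ω2) (X : CohCfg (Ω1 × Ω2))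
    (hX : IsWreath X X1 X2) (P : Set (Set (Ω1 × Ω2)))
    (h1 : ∀ α : Ω2, X1.IsGenBase {D : Set Ω1 | ∃ Γ ∈ P, D = {x : Ω1 | (x, α) ∈ Γ}})
    (h2 : X2.IsGenBase {D : Set Ω2 | ∃ Γ ∈ P, D = Prod.snd '' Γ}) :
    X.IsGenBase P := by
  intro X' hfis hP
  by_cases hE : IsEmpty (Ω1 × Ω2)
  · intro p
    exact (hE.false p.1).elim
  · rw [not_isEmpty_iff] at hE
    have hN1 : Nonempty Ω1 := ⟨hE.some.1⟩
    have hN2 : Nonempty Ω2 := ⟨hE.some.2⟩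
    have he : X'.rel (wreathE Ω1 Ω2) := hfis _ hX.1.1
    have hblock : ∀ r ∈ X'.S, (∃ p ∈ r, p.1.2 = p.2.2) → r ⊆ wreathE Ω1 Ω2 := by
      rintro r hr ⟨p, hp, hpd⟩
      exact (rel_iff X' _).1 he p hpd r hr hp
    -- the restrictions of `X'` to the blocks, and the quotient of `X'`
    have hres : ∀ α : Ω2, ∃ Y1 : CohCfg Ω1,
        Y1.S = {u | u.Nonempty ∧ ∃ r ∈ X'.S, u = trA α r} :=
      fun α => exists_restr X' α hblock
    choose Y1 hY1S using hres
    obtain ⟨Y2, hY2S⟩ := exists_quot X' he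
    -- each restriction is a fission of X1
    have hfis1 : ∀ α, X1.IsFission (Y1 α) := by
      intro α u hu
      rw [rel_iff]
      obtain ⟨T, hT, rfl⟩ := hu
      rintro p hpu u' hu' hpu'
      obtain ⟨s0, hs0T, hps0⟩ := hpu
      have hs0 : s0 ∈ X1.S := hT hs0T
      rw [← hX.1.2.1 α] at hs0
      obtain ⟨hne, r0, hr0, hs0eq⟩ := hs0
      have hP0 : ((p.1, α), (p.2, α)) ∈ r0 := by
        rw [hs0eq] at hps0
        exact hps0
      obtain ⟨r', ⟨hr', hPr'⟩, -⟩ := X'.exists_unique_mem ((p.1, α), (p.2, α))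
      have hr'sub : r' ⊆ r0 :=
        (rel_iff X' r0).1 (hfis r0 (rel_basic X hr0)) _ hP0 r' hr' hPr'
      rw [hY1S α] at hu'
      obtain ⟨hne', r'', hr'', rfl⟩ := hu'
      have hrr : r'' = r' := basic_unique X' hr'' hr' hpu' hPr'
      subst hrr
      intro q hq
      exact ⟨s0, hs0T, by rw [hs0eq]; exact hr'sub hq⟩
    -- the quotient is a fission of X2
    have hfis2 : X2.IsFission Y2 := by
      intro v hv
      rw [rel_iff]
      obtain ⟨T, hT, rfl⟩ := hv
      rintro p hpv v' hv' hpv'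
      obtain ⟨s0, hs0T, hps0⟩ := hpv
      have hs0 : s0 ∈ X2.S := hT hs0T
      rw [← hX.1.2.2] at hs0
      obtain ⟨r0, hr0, hs0eq⟩ := hs0
      have hp0 : p ∈ projQ r0 := by
        rw [hs0eq] at hps0
        exact hps0
      obtain ⟨x, y, hP0⟩ := hp0
      obtain ⟨r', ⟨hr', hPr'⟩, -⟩ := X'.exists_unique_mem ((x, p.1), (y, p.2))
      have hr'sub : r' ⊆ r0 :=
        (rel_iff X' r0).1 (hfis r0 (rel_basic X hr0)) _ hP0 r' hr' hPr'
      rw [hY2S] at hv'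
      obtain ⟨r'', hr'', rfl⟩ := hv'
      have heq : projQ r'' = projQ r' :=
        projQ_eq X' he hr'' hr' ⟨p, hpv', x, y, hPr'⟩
      intro q hq
      rw [heq] at hq
      obtain ⟨x', y', hq'⟩ := hq
      exact ⟨s0, hs0T, by rw [hs0eq]; exact ⟨x', y', hr'sub hq'⟩⟩
    -- the traces of members of P are unions of fibers of the restrictions
    have hufib1 : ∀ α : Ω2, ∀ D ∈ {D : Set Ω1 | ∃ Γ ∈ P, D = {x : Ω1 | (x, α) ∈ Γ}},
        (Y1 α).unionFibers D := by
      rintro α D ⟨Γ, hΓ, rfl⟩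
      obtain ⟨F, hF, hΓeq⟩ := hP Γ hΓ
      refine ⟨{Δ1 : Set Ω1 | Δ1.Nonempty ∧ ∃ Δ ∈ F, Δ1 = {x : Ω1 | (x, α) ∈ Δ}}, ?_, ?_⟩
      · rintro Δ1 ⟨hne, Δ, hΔF, rfl⟩
        show diagOn {x : Ω1 | (x, α) ∈ Δ} ∈ (Y1 α).S
        rw [hY1S α]
        refine ⟨?_, diagOn Δ, hF hΔF, ?_⟩
        · obtain ⟨x, hx⟩ := hne
          exact ⟨(x, x), hx, rfl⟩
        · ext q
          constructor
          · rintro ⟨hq1, hq2⟩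
            exact ⟨hq1, by rw [show q.1 = q.2 from hq2]⟩
          · rintro ⟨hq1, hq2⟩
            exact ⟨hq1, congrArg Prod.fst hq2⟩
      · subst hΓeq
        ext x
        constructor
        · rintro ⟨Δ, hΔF, hxΔ⟩
          exact ⟨{x' : Ω1 | (x', α) ∈ Δ}, ⟨⟨x, hxΔ⟩, Δ, hΔF, rfl⟩, hxΔ⟩
        · rintro ⟨Δ1, ⟨hne, Δ, hΔF, rfl⟩, hx⟩
          exact ⟨Δ, hΔF, hx⟩
    -- the projections of members of P are unions of fibers of the quotient
    have hufib2 : ∀ D ∈ {D : Set Ω2 | ∃ Γ ∈ P, D = Prod.snd '' Γ}, Y2.unionFibers D := by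
      rintro D ⟨Γ, hΓ, rfl⟩
      obtain ⟨F, hF, hΓeq⟩ := hP Γ hΓ
      refine ⟨{D2 : Set Ω2 | ∃ Δ ∈ F, D2 = Prod.snd '' Δ}, ?_, ?_⟩
      · rintro D2 ⟨Δ, hΔF, rfl⟩
        show diagOn (Prod.snd '' Δ) ∈ Y2.S
        rw [hY2S]
        refine ⟨diagOn Δ, hF hΔF, ?_⟩
        ext q
        constructor
        · rintro ⟨⟨a, haΔ, ha2⟩, h12⟩
          refine ⟨a.1, a.1, ?_, ?_⟩
          · show ((a.1 : Ω1), q.1) ∈ Δ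
            rw [show ((a.1 : Ω1), q.1) = a from Prod.ext rfl ha2.symm]
            exact haΔ
          · show ((a.1 : Ω1), q.1) = (a.1, q.2)
            rw [show q.1 = q.2 from h12]
        · rintro ⟨x, y, hmem, heq⟩
          exact ⟨⟨(x, q.1), hmem, rfl⟩, congrArg Prod.snd heq⟩
      · subst hΓeq
        ext β
        constructor
        · rintro ⟨a, ⟨Δ, hΔF, haΔ⟩, ha2⟩
          exact ⟨Prod.snd '' Δ, ⟨Δ, hΔF, rfl⟩, a, haΔ, ha2⟩
        · rintro ⟨D2, ⟨Δ, hΔF, rfl⟩, a, haΔ, ha2⟩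
          exact ⟨a, ⟨Δ, hΔF, haΔ⟩, ha2⟩
    -- completeness of restrictions and quotient
    have hC1 : ∀ α, (Y1 α).Complete := fun α => h1 α (Y1 α) (hfis1 α) (hufib1 α)
    have hC2 : Y2.Complete := h2 Y2 hfis2 hufib2
    -- Step 1: each basic relation of X' lies in a single block
    have hblk2 : ∀ r ∈ X'.S, ∀ p ∈ r, ∀ q ∈ r, q.1.2 = p.1.2 ∧ q.2.2 = p.2.2 := by
      intro r hr p hp q hq
      have hq2 : projQ r ∈ Y2.S := by rw [hY2S]; exact ⟨r, hr, rfl⟩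
      have hsing : {((p.1.2, p.2.2) : Ω2 × Ω2)} ∈ Y2.S := hC2 _
      have hmem : ((p.1.2, p.2.2) : Ω2 × Ω2) ∈ projQ r := ⟨p.1.1, p.2.1, hp⟩
      have heq := basic_unique Y2 hq2 hsing hmem rfl
      have hq' : ((q.1.2, q.2.2) : Ω2 × Ω2) ∈ projQ r := ⟨q.1.1, q.2.1, hq⟩
      rw [heq] at hq'
      have hq'' : ((q.1.2, q.2.2) : Ω2 × Ω2) = (p.1.2, p.2.2) := hq'
      exact Prod.ext_iff.mp hq''
    -- Step 2: every singleton is a fiber of X'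
    have fib : ∀ δ : Ω1 × Ω2, diagOn {δ} ∈ X'.S := by
      rintro ⟨x, α⟩
      have h := hC1 α (x, x)
      rw [hY1S α] at h
      obtain ⟨hne, r, hrS, htr⟩ := h
      have hxx : ((x, α), (x, α)) ∈ r := by
        have hm : ((x : Ω1), x) ∈ trA α r := by rw [← htr]; rfl
        exact hm
      have hrr : r = diagOn {((x, α) : Ω1 × Ω2)} := by
        apply Set.Subset.antisymm
        · intro q hqr
          obtain ⟨hb1, hb2⟩ := hblk2 r hrS _ hxx q hqr
          have hq' : ((q.1.1 : Ω1), q.2.1) ∈ trA α r := by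
            show ((q.1.1, α), (q.2.1, α)) ∈ r
            rw [show ((q.1.1 : Ω1), α) = q.1 from Prod.ext rfl hb1.symm,
                show ((q.2.1 : Ω1), α) = q.2 from Prod.ext rfl hb2.symm]
            exact hqr
          rw [← htr] at hq'
          have hq'' : ((q.1.1 : Ω1), q.2.1) = (x, x) := hq'
          have e1 : q.1.1 = x := congrArg Prod.fst hq''
          have e2 : q.2.1 = x := congrArg Prod.snd hq''
          refine ⟨?_, ?_⟩
          · show q.1 = (x, α)
            exact Prod.ext e1 hb1
          · show q.1 = q.2
            exact Prod.ext (e1.trans e2.symm) (hb1.trans hb2.symm)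
        · intro q hq
          have hq1 : q.1 = ((x, α) : Ω1 × Ω2) := hq.1
          have hq2 : q.2 = ((x, α) : Ω1 × Ω2) := hq.2.symm.trans hq1
          rw [show q = (((x, α), (x, α)) : (Ω1 × Ω2) × (Ω1 × Ω2)) from Prod.ext hq1 hq2]
          exact hxx
      rw [← hrr]
      exact hrS
    -- Step 3: every basic relation of X' is a singleton
    intro p
    obtain ⟨t, ⟨ht, hpt⟩, -⟩ := X'.exists_unique_mem p
    suffices hts : t = {p} by
      rw [← hts]
      exact ht
    apply Set.Subset.antisymm
    · intro q hq
      have hA : diagOn {p.1} ∈ X'.S := fib p.1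
      have hB : diagOn {p.2} ∈ X'.S := fib p.2
      obtain ⟨γ, hγ1, hγ2⟩ :=
        witness_transfer X' hA ht ht hpt hq ⟨p.1, ⟨rfl, rfl⟩, hpt⟩
      obtain ⟨γ', hγ1', hγ2'⟩ :=
        witness_transfer X' ht hB ht hpt hq ⟨p.2, hpt, ⟨rfl, rfl⟩⟩
      have hq1 : q.1 = p.1 := hγ1.1
      have hq2 : q.2 = p.2 := hγ2'.2.symm.trans hγ2'.1
      show q = p
      exact Prod.ext hq1 hq2
    · intro q hq
      rw [hq]
      exact hpt
end

section
/- Let Y = (Γ, T) be a coherent configuration, m ≥ 1, L ≤ Sym({1,…,m}), and X = Y↑L on Ω = Γ^m. Fix γ0 ∈ Γ, let α ∈ Ω be the point all of whose coordinates equal γ0, for 0 ≤ i ≤ m let r_i = {(β,δ) ∈ Ω × Ω : d(β,δ) = i} (Hamming distance d, with r_{−1} = ∅), set r = r_1, and for i ∈ {1,…,m} let Γ_i = {β ∈ Ω : d(α,β) = 1 and β_i ≠ γ0}, so that αr is the disjoint union of the Γ_i. Then the map ρ : Ω → 2^{αr} sending β to βr_{d(α,β)−1} ∩ αr is injective, and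 its image is exactly {Λ ⊆ αr : |Λ ∩ Γ_i| ≤ 1 for all i}. In particular, the set αr is a base of the smallest fission X_α. -/
open Set

namespace Aux170311

section Comb
variable {Γ : Type*} {m : ℕ} (γ0 : Γ)

lemma hammingD_comm (β δ : Fin m → Γ) : hammingD β δ = hammingD δ β := by
  unfold hammingD; congr 1; ext i; exact ne_comm

lemma hammingD_const (β : Fin m → Γ) :
    hammingD (fun _ => γ0) β = Set.ncard {i | β i ≠ γ0} := by
  unfold hammingD; congr 1; ext i; exact ne_comm

/-- Characterization of membership in `ρ(β)`. -/
lemma mem_rho_iff (β δ : Fin m → Γ) :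
    (hammingD (fun _ => γ0) δ = 1 ∧ hammingD β δ + 1 = hammingD (fun _ => γ0) β) ↔
    ∃ i, β i ≠ γ0 ∧ δ = Function.update (fun _ => γ0) i (β i) := by
  constructor
  · rintro ⟨h1, h2⟩
    rw [hammingD_const] at h1
    obtain ⟨i, hi⟩ := Set.ncard_eq_one.mp h1
    have hδi : δ i ≠ γ0 := by
      have : i ∈ ({i} : Set (Fin m)) := rfl
      rw [← hi] at this; exact this
    have hδj : ∀ j, j ≠ i → δ j = γ0 := by
      intro j hj
      by_contra hne
      have : j ∈ ({i} : Set (Fin m)) := hi ▸ hne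
      exact hj this
    by_cases hbd : β i = δ i
    · refine ⟨i, by rw [hbd]; exact hδi, ?_⟩
      funext j
      by_cases hji : j = i
      · subst hji; simp [Function.update, hbd]
      · simp [Function.update, hji, hδj j hji]
    · exfalso
      have hset : {j | β j ≠ δ j} = {j | β j ≠ γ0} ∪ {i} := by
        ext j
        by_cases hji : j = i
        · subst hji; simp [hbd]
        · simp [hδj j hji, hji]
      rw [hammingD, hset, hammingD_const] at h2
      by_cases hiβ : i ∈ {j | β j ≠ γ0}
      · rw [Set.union_eq_self_of_subset_right (by simpa using hiβ)] at h2
        omega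
      · rw [Set.ncard_union_eq (by simpa using hiβ) (Set.toFinite _) (Set.toFinite _),
          Set.ncard_singleton] at h2
        omega
  · rintro ⟨i, hβi, rfl⟩
    have hset1 : {j | (fun _ => γ0) j ≠ Function.update (fun _ => γ0) i (β i) j}
        = ({i} : Set (Fin m)) := by
      ext j
      by_cases hji : j = i
      · subst hji; simp [Function.update, hβi, Ne.symm hβi]
      · simp [Function.update, hji]
    have hset2 : {j | β j ≠ Function.update (fun _ => γ0) i (β i) j}
        = {j | β j ≠ γ0} \ {i} := by
      ext j
      by_cases hji : j = i
      · subst hji; simp [Function.update]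
      · simp [Function.update, hji]
    constructor
    · rw [hammingD, hset1, Set.ncard_singleton]
    · rw [hammingD, hset2, hammingD_const,
        Set.ncard_diff_singleton_add_one (by exact hβi) (Set.toFinite _)]

/-- The map `ρ`. -/
def rho (β : Fin m → Γ) : Set (Fin m → Γ) :=
  {δ | hammingD (fun _ => γ0) δ = 1 ∧ hammingD β δ + 1 = hammingD (fun _ => γ0) β}

lemma update_mem_rho {β : Fin m → Γ} {i : Fin m} (h : β i ≠ γ0) :
    Function.update (fun _ => γ0) i (β i) ∈ rho γ0 β :=
  (mem_rho_iff γ0 β _).mpr ⟨i, h, rfl⟩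

lemma update_eq_case {β β' : Fin m → Γ} {i j : Fin m} (hβ : β i ≠ γ0) (hβ' : β' j ≠ γ0)
    (h : Function.update (fun _ => γ0) i (β i) = Function.update (fun _ => γ0) j (β' j)) :
    j = i ∧ β' i = β i := by
  have hj := congrFun h j
  by_cases hji : j = i
  · subst hji
    simp [Function.update] at hj
    exact ⟨rfl, hj.symm⟩
  · exfalso
    rw [Function.update_of_ne hji, Function.update_self] at hj
    exact hβ' hj.symm

lemma rho_subset_imp {β β' : Fin m → Γ} (h : rho γ0 β ⊆ rho γ0 β') :
    ∀ i, β i ≠ γ0 → β' i = β i := by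
  intro i hi
  have := h (update_mem_rho γ0 hi)
  obtain ⟨j, hj, heq⟩ := (mem_rho_iff γ0 β' _).mp this
  obtain ⟨rfl, h2⟩ := update_eq_case γ0 hj hi heq.symm
  exact h2.symm

lemma rho_inj_of_eq {β β' : Fin m → Γ} (h : rho γ0 β = rho γ0 β') : β = β' := by
  funext i
  by_cases h1 : β i = γ0
  · by_cases h2 : β' i = γ0
    · rw [h1, h2]
    · exact rho_subset_imp γ0 h.ge i h2
  · exact (rho_subset_imp γ0 h.le i h1).symm

lemma rho_eq_image (β : Fin m → Γ) :
    rho γ0 β = (fun i => Function.update (fun _ => γ0) i (β i)) '' {i | β i ≠ γ0} := by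
  ext δ
  rw [rho, Set.mem_setOf_eq, mem_rho_iff]
  constructor
  · rintro ⟨i, hi, rfl⟩; exact ⟨i, hi, rfl⟩
  · rintro ⟨i, hi, rfl⟩; exact ⟨i, hi, rfl⟩

lemma rho_ncard (β : Fin m → Γ) :
    (rho γ0 β).ncard = hammingD (fun _ => γ0) β := by
  rw [rho_eq_image, hammingD_const]
  apply Set.ncard_image_of_injOn
  intro i hi j hj h
  exact (update_eq_case γ0 hj hi h.symm).1

/-- The support of a point at distance one from the constant point is a single
coordinate. -/
lemma supp_singleton {δ : Fin m → Γ} (h : hammingD (fun _ => γ0) δ = 1) :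
    ∃ i, δ i ≠ γ0 ∧ ∀ j, j ≠ i → δ j = γ0 := by
  rw [hammingD_const] at h
  obtain ⟨i, hi⟩ := Set.ncard_eq_one.mp h
  refine ⟨i, ?_, ?_⟩
  · have : i ∈ ({i} : Set (Fin m)) := rfl
    rw [← hi] at this; exact this
  · intro j hj
    by_contra hne
    exact hj (hi ▸ hne : j ∈ ({i} : Set (Fin m)))

lemma rho_range [Fintype Γ] :
    Set.range (rho (m := m) γ0) =
      {Λ : Set (Fin m → Γ) | Λ ⊆ {β | hammingD (fun _ => γ0) β = 1} ∧
        ∀ i : Fin m, (Λ ∩ {β | hammingD (fun _ => γ0) β = 1 ∧ β i ≠ γ0}).ncard ≤ 1} := by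
  ext Λ
  constructor
  · rintro ⟨β, rfl⟩
    constructor
    · intro δ hδ; exact hδ.1
    · intro i
      have hsub : rho γ0 β ∩ {x | hammingD (fun _ => γ0) x = 1 ∧ x i ≠ γ0}
          ⊆ {Function.update (fun _ => γ0) i (β i)} := by
        rintro δ ⟨hδρ, -, hδi⟩
        obtain ⟨j, hj, rfl⟩ := (mem_rho_iff γ0 β δ).mp hδρ
        have : j = i := by
          by_contra hji
          exact hδi (Function.update_of_ne (fun h => hji h.symm) _ _)
        subst this
        rfl
      calc _ ≤ ({Function.update (fun _ => γ0) i (β i)} : Set (Fin m → Γ)).ncard :=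
            Set.ncard_le_ncard hsub (Set.toFinite _)
        _ = 1 := Set.ncard_singleton _
  · rintro ⟨hsub, hcard⟩
    classical
    refine ⟨fun i => if h : ∃ δ ∈ Λ, δ i ≠ γ0 then h.choose i else γ0, ?_⟩
    set β : Fin m → Γ := fun i => if h : ∃ δ ∈ Λ, δ i ≠ γ0 then h.choose i else γ0 with hβ
    have key : ∀ i (h : ∃ δ ∈ Λ, δ i ≠ γ0), ∀ δ' ∈ Λ, δ' i ≠ γ0 → δ' = h.choose := by
      intro i h δ' hδ' hδ'i
      have h1 : h.choose ∈ Λ := h.choose_spec.1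
      have h2 : h.choose i ≠ γ0 := h.choose_spec.2
      have hmem1 : h.choose ∈ Λ ∩ {x | hammingD (fun _ => γ0) x = 1 ∧ x i ≠ γ0} :=
        ⟨h1, hsub h1, h2⟩
      have hmem2 : δ' ∈ Λ ∩ {x | hammingD (fun _ => γ0) x = 1 ∧ x i ≠ γ0} :=
        ⟨hδ', hsub hδ', hδ'i⟩
      by_contra hne
      have h21 : 1 < (Λ ∩ {x | hammingD (fun _ => γ0) x = 1 ∧ x i ≠ γ0}).ncard :=
        (Set.one_lt_ncard_iff (Set.toFinite _)).mpr ⟨δ', h.choose, hmem2, hmem1, hne⟩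
      exact Nat.not_lt.mpr (hcard i) h21
    ext δ
    rw [rho, Set.mem_setOf_eq, mem_rho_iff]
    constructor
    · rintro ⟨i, hi, rfl⟩
      have hpos : ∃ δ' ∈ Λ, δ' i ≠ γ0 := by
        by_contra hno
        rw [hβ] at hi
        simp only [dif_neg hno] at hi
        exact hi rfl
      have hβi : β i = hpos.choose i := by rw [hβ]; simp only [dif_pos hpos]
      have h1 : hpos.choose ∈ Λ := hpos.choose_spec.1
      have h2 : hpos.choose i ≠ γ0 := hpos.choose_spec.2
      obtain ⟨j, hji, hjall⟩ := supp_singleton γ0 (hsub h1)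
      have hij : j = i := by
        by_contra hne
        exact h2 (hjall i (fun h => hne h.symm))
      subst hij
      have : Function.update (fun _ => γ0) j (β j) = hpos.choose := by
        funext l
        by_cases hl : l = j
        · subst hl; rw [Function.update_self, hβi]
        · rw [Function.update_of_ne hl, hjall l hl]
      rw [this]; exact h1
    · intro hδ
      obtain ⟨i, hi, hiall⟩ := supp_singleton γ0 (hsub hδ)
      have hpos : ∃ δ' ∈ Λ, δ' i ≠ γ0 := ⟨δ, hδ, hi⟩
      have hβi : β i = hpos.choose i := by rw [hβ]; simp only [dif_pos hpos]
      have hδc : δ = hpos.choose := key i hpos δ hδ hi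
      refine ⟨i, ?_, ?_⟩
      · rw [hβi, ← hδc]; exact hi
      · funext l
        by_cases hl : l = i
        · subst hl; rw [Function.update_self, hβi, ← hδc]
        · rw [Function.update_of_ne hl, hiall l hl]

end Comb

section CC
variable {Ω : Type*}

lemma cc_unique (X : CohCfg Ω) {r s : Set (Ω × Ω)} (hr : r ∈ X.S) (hs : s ∈ X.S)
    {p : Ω × Ω} (hpr : p ∈ r) (hps : p ∈ s) : r = s := by
  obtain ⟨t, -, ht⟩ := X.exists_unique_mem p
  rw [ht r ⟨hr, hpr⟩, ht s ⟨hs, hps⟩]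

lemma diagOn_singleton (a : Ω) : diagOn ({a} : Set Ω) = {((a : Ω), a)} := by
  ext p
  constructor
  · rintro ⟨h1, h2⟩
    have : p = (p.1, p.2) := rfl
    rw [Set.mem_singleton_iff, this, ← h2, h1]
  · rintro rfl; exact ⟨rfl, rfl⟩

lemma fiber_eq (X : CohCfg Ω) {Λ Λ' : Set Ω} (h : diagOn Λ ∈ X.S) (h' : diagOn Λ' ∈ X.S)
    {x : Ω} (hx : x ∈ Λ) (hx' : x ∈ Λ') : Λ = Λ' := by
  have heq : diagOn Λ = diagOn Λ' :=
    cc_unique X h h' (p := (x, x)) ⟨hx, rfl⟩ ⟨hx', rfl⟩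
  ext y
  constructor
  · intro hy
    have : (y, y) ∈ diagOn Λ' := heq ▸ (⟨hy, rfl⟩ : (y, y) ∈ diagOn Λ)
    exact this.1
  · intro hy
    have : (y, y) ∈ diagOn Λ := heq.symm ▸ (⟨hy, rfl⟩ : (y, y) ∈ diagOn Λ')
    exact this.1

lemma left_support (X : CohCfg Ω) {a : Ω} (ha : diagOn ({a} : Set Ω) ∈ X.S)
    {s : Set (Ω × Ω)} (hs : s ∈ X.S) {x : Ω} (hax : (a, x) ∈ s) :
    ∀ q ∈ s, q.1 = a := by
  intro q hq
  have hci := X.card_indep _ ha _ hs _ hs (a, x) hax q hq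
  have h1 : Nat.card {γ : Ω // ((a, x).1, γ) ∈ diagOn ({a} : Set Ω) ∧ (γ, (a, x).2) ∈ s}
      = 1 := by
    rw [Nat.card_eq_one_iff_unique]
    constructor
    · constructor
      rintro ⟨γ, ⟨-, h2⟩, -⟩ ⟨γ', ⟨-, h2'⟩, -⟩
      exact Subtype.ext (h2'.symm.trans h2 : γ' = γ).symm
    · exact ⟨⟨a, ⟨rfl, rfl⟩, hax⟩⟩
  rw [h1] at hci
  obtain ⟨-, ⟨⟨γ, hγ1, -⟩⟩⟩ := Nat.card_eq_one_iff_unique.mp hci.symm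
  exact hγ1.1

lemma right_support (X : CohCfg Ω) {b : Ω} (hb : diagOn ({b} : Set Ω) ∈ X.S)
    {s : Set (Ω × Ω)} (hs : s ∈ X.S) {x : Ω} (hbx : (x, b) ∈ s) :
    ∀ q ∈ s, q.2 = b := by
  intro q hq
  have hci := X.card_indep _ hs _ hb _ hs (x, b) hbx q hq
  have h1 : Nat.card {γ : Ω // ((x, b).1, γ) ∈ s ∧ (γ, (x, b).2) ∈ diagOn ({b} : Set Ω)}
      = 1 := by
    rw [Nat.card_eq_one_iff_unique]
    constructor
    · constructor
      rintro ⟨γ, -, ⟨h2, h3⟩⟩ ⟨γ', -, ⟨h2', h3'⟩⟩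
      exact Subtype.ext (h2.trans h2'.symm)
    · exact ⟨⟨b, hbx, rfl, rfl⟩⟩
  rw [h1] at hci
  obtain ⟨-, ⟨⟨γ, -, hγ2, hγ3⟩⟩⟩ := Nat.card_eq_one_iff_unique.mp hci.symm
  exact hγ3.symm.trans hγ2

lemma exists_fiber (X : CohCfg Ω) (x : Ω) : ∃ Λ, diagOn Λ ∈ X.S ∧ x ∈ Λ := by
  obtain ⟨t, ⟨ht, hxt⟩, -⟩ := X.exists_unique_mem (x, x)
  have hdiag : ∀ q ∈ t, q.1 = q.2 := X.diag_of_mem t ht (x, x) hxt rfl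
  refine ⟨{z | (z, z) ∈ t}, ?_, hxt⟩
  have heq : diagOn {z | (z, z) ∈ t} = t := by
    ext p
    constructor
    · rintro ⟨h1, h2⟩
      have hp : p = (p.1, p.1) := by
        rw [Prod.ext_iff]; exact ⟨rfl, h2.symm⟩
      rw [hp]; exact h1
    · intro hp
      have h2 := hdiag p hp
      have hp1 : (p.1, p.1) ∈ t := by
        have : p = (p.1, p.1) := by rw [Prod.ext_iff]; exact ⟨rfl, h2.symm⟩
        rw [← this]; exact hp
      exact ⟨hp1, h2⟩
  rw [heq]; exact ht

lemma nbhd_fiber (X : CohCfg Ω) {a : Ω} (ha : diagOn ({a} : Set Ω) ∈ X.S)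
    {u : Set (Ω × Ω)} (hu : X.rel u) {x : Ω} (hx : (a, x) ∈ u) :
    ∃ Λ, diagOn Λ ∈ X.S ∧ x ∈ Λ ∧ ∀ y ∈ Λ, (a, y) ∈ u := by
  obtain ⟨T, hT, rfl⟩ := hu
  obtain ⟨s, hsT, hxs⟩ := hx
  have hs : s ∈ X.S := hT hsT
  obtain ⟨Λ, hΛ, hxΛ⟩ := exists_fiber X x
  refine ⟨Λ, hΛ, hxΛ, fun y hy => ?_⟩
  have hswap := X.swap_mem s hs
  have hci := X.card_indep _ hswap _ hs _ hΛ (x, x) ⟨hxΛ, rfl⟩ (y, y) ⟨hy, rfl⟩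
  have hls := left_support X ha hs hxs
  have h1 : Nat.card {γ : Ω // ((x, x).1, γ) ∈ Prod.swap '' s ∧ (γ, (x, x).2) ∈ s}
      = 1 := by
    rw [Nat.card_eq_one_iff_unique]
    constructor
    · constructor
      rintro ⟨γ, -, h2⟩ ⟨γ', -, h2'⟩
      exact Subtype.ext ((hls _ h2).trans (hls _ h2').symm)
    · exact ⟨⟨a, ⟨(a, x), hxs, rfl⟩, hxs⟩⟩
  rw [h1] at hci
  obtain ⟨-, ⟨⟨γ, -, hγ2⟩⟩⟩ := Nat.card_eq_one_iff_unique.mp hci.symm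
  have : γ = a := hls _ hγ2
  subst this
  exact ⟨s, hsT, hγ2⟩

lemma singleton_rel_basic (X : CohCfg Ω) {p : Ω × Ω} (h : X.rel {p}) : {p} ∈ X.S := by
  obtain ⟨T, hT, heq⟩ := h
  have hp : p ∈ ⋃₀ T := heq ▸ rfl
  obtain ⟨s, hsT, hps⟩ := hp
  have hsub : s ⊆ {p} := heq ▸ Set.subset_sUnion_of_mem hsT
  have : s = {p} := Set.Subset.antisymm hsub (by simpa using hps)
  exact this ▸ hT hsT

end CC

section Expo
variable {Γ : Type*} {m : ℕ}

lemma expo_const_dist (Y : CohCfg Γ) (L : Subgroup (Equiv.Perm (Fin m)))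
    {s : Set ((Fin m → Γ) × (Fin m → Γ))} (hs : s ∈ expoS Y.S L)
    {p q : (Fin m → Γ) × (Fin m → Γ)} (hp : p ∈ s) (hq : q ∈ s) :
    hammingD p.1 p.2 = hammingD q.1 q.2 := by
  obtain ⟨t, ht, rfl⟩ := hs
  have key : ∀ z : (Fin m → Γ) × (Fin m → Γ), ∀ l : Equiv.Perm (Fin m),
      (∀ i, (z.1 i, z.2 i) ∈ t (l i)) →
      hammingD z.1 z.2 = Set.ncard {j | ¬ ∀ w ∈ t j, w.1 = w.2} := by
    intro z l hz
    have hset : {i | z.1 i ≠ z.2 i} = l ⁻¹' {j | ¬ ∀ w ∈ t j, w.1 = w.2} := by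
      ext i
      simp only [Set.mem_setOf_eq, Set.mem_preimage]
      constructor
      · intro hne hall
        exact hne (hall _ (hz i))
      · intro hnall heq
        exact hnall (Y.diag_of_mem _ (ht _) _ (hz i) heq)
    rw [hammingD, hset, ← Equiv.image_symm_eq_preimage]
    exact Set.ncard_image_of_injective _ l.symm.injective
  obtain ⟨l, -, hpl⟩ := hp
  obtain ⟨l', -, hql⟩ := hq
  rw [key p l hpl, key q l' hql]

lemma hamming_rel (Y : CohCfg Γ) (L : Subgroup (Equiv.Perm (Fin m)))
    (X : CohCfg (Fin m → Γ)) (hX : X.S = expoS Y.S L) (k : ℕ) :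
    X.rel {p : (Fin m → Γ) × (Fin m → Γ) | hammingD p.1 p.2 = k} := by
  refine ⟨{s | s ∈ X.S ∧ s ⊆ {p | hammingD p.1 p.2 = k}}, fun s hs => hs.1, ?_⟩
  apply Set.Subset.antisymm
  · intro p hp
    obtain ⟨s, ⟨hs, hps⟩, -⟩ := X.exists_unique_mem p
    refine Set.mem_sUnion.mpr ⟨s, ⟨hs, ?_⟩, hps⟩
    intro q hq
    have := expo_const_dist Y L (hX ▸ hs) hq hps
    rw [Set.mem_setOf_eq, this]
    exact hp
  · exact Set.sUnion_subset fun s hs => hs.2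

end Expo

end Aux170311

open Aux170311

/-- **Lemma (170311r).** For `X = Y↑L` on `Ω = Γ^m`, `γ0 ∈ Γ` and `α` the constant point,
the map `ρ : β ↦ βr_{d(α,β)−1} ∩ αr` is injective with image
`{Λ ⊆ αr : |Λ ∩ Γ_i| ≤ 1 for all i}`; in particular `αr` is a base of `X_α`. -/
theorem stmt_13 {Γ : Type*} [Fintype Γ] (Y : CohCfg Γ) (m : ℕ) (hm : 1 ≤ m)
    (L : Subgroup (Equiv.Perm (Fin m)))
    (X : CohCfg (Fin m → Γ)) (hX : X.S = expoS Y.S L) (γ0 : Γ) :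
    Function.Injective (fun β : Fin m → Γ =>
      ({δ | hammingD (fun _ => γ0) δ = 1 ∧ hammingD β δ + 1 = hammingD (fun _ => γ0) β}
        : Set (Fin m → Γ))) ∧
    Set.range (fun β : Fin m → Γ =>
      ({δ | hammingD (fun _ => γ0) δ = 1 ∧ hammingD β δ + 1 = hammingD (fun _ => γ0) β}
        : Set (Fin m → Γ)))
      = {Λ : Set (Fin m → Γ) | Λ ⊆ {β | hammingD (fun _ => γ0) β = 1} ∧
          ∀ i : Fin m,
            (Λ ∩ {β | hammingD (fun _ => γ0) β = 1 ∧ β i ≠ γ0}).ncard ≤ 1} ∧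
    (∀ Xα : CohCfg (Fin m → Γ), X.SmallestFissionAt Xα (fun _ => γ0) →
      Xα.IsBase {β | hammingD (fun _ => γ0) β = 1}) := by
  classical
  refine ⟨?_, ?_, ?_⟩
  · intro β β' h
    exact rho_inj_of_eq γ0 h
  · exact rho_range γ0
  · rintro Xα ⟨hfis, hαfib, -⟩ X' hfis' hfibs
    have hXfis : X.IsFission X' := fun u hu => hfis' u (hfis u hu)
    have hαfib' : diagOn ({(fun _ => γ0 : Fin m → Γ)} : Set (Fin m → Γ)) ∈ X'.S := by
      have hrel : Xα.rel (diagOn {(fun _ => γ0 : Fin m → Γ)}) :=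
        ⟨{diagOn {(fun _ => γ0 : Fin m → Γ)}}, Set.singleton_subset_iff.mpr hαfib,
          (Set.sUnion_singleton _).symm⟩
      have h2 := hfis' _ hrel
      rw [diagOn_singleton] at h2 ⊢
      exact singleton_rel_basic X' h2
    have fib : ∀ β : Fin m → Γ, diagOn ({β} : Set (Fin m → Γ)) ∈ X'.S := by
      intro β
      by_cases hβα : β = (fun _ => γ0)
      · rw [hβα]; exact hαfib'
      · have hk1 : 1 ≤ hammingD (fun _ => γ0) β := by
          rw [hammingD_const]
          have hne : {i | β i ≠ γ0}.Nonempty := by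
            by_contra hempty
            rw [Set.not_nonempty_iff_eq_empty] at hempty
            apply hβα
            funext i
            by_contra hi
            exact absurd (hempty ▸ hi : i ∈ (∅ : Set (Fin m))) (Set.notMem_empty i)
          have := (Set.ncard_pos (Set.toFinite _)).mpr hne
          omega
        have hrk : X'.rel {p : (Fin m → Γ) × (Fin m → Γ) |
            hammingD p.1 p.2 = hammingD (fun _ => γ0) β} :=
          hXfis _ (hamming_rel Y L X hX _)
        have hrk1 : X'.rel {p : (Fin m → Γ) × (Fin m → Γ) |
            hammingD p.1 p.2 = hammingD (fun _ => γ0) β - 1} :=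
          hXfis _ (hamming_rel Y L X hX _)
        obtain ⟨Λ, hΛS, hβΛ, hΛsub⟩ := nbhd_fiber X' hαfib' hrk (x := β) rfl
        have hsubδ : ∀ δ ∈ rho γ0 β, ∀ y ∈ Λ,
            hammingD δ y = hammingD (fun _ => γ0) β - 1 := by
          intro δ hδ y hy
          have hδfib : diagOn ({δ} : Set (Fin m → Γ)) ∈ X'.S := hfibs δ hδ.1
          have hmemb : (δ, β) ∈ {p : (Fin m → Γ) × (Fin m → Γ) |
              hammingD p.1 p.2 = hammingD (fun _ => γ0) β - 1} := by
            have hc : hammingD δ β = hammingD β δ := hammingD_comm _ _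
            have h2 := hδ.2
            simp only [Set.mem_setOf_eq]
            omega
          obtain ⟨Λ', hΛ'S, hβΛ', hΛ'sub⟩ := nbhd_fiber X' hδfib hrk1 hmemb
          have hΛeq : Λ' = Λ := fiber_eq X' hΛ'S hΛS hβΛ' hβΛ
          exact hΛ'sub y (hΛeq ▸ hy)
        have hΛβ : Λ = {β} := by
          apply Set.Subset.antisymm
          · intro y hy
            have hyk : hammingD (fun _ => γ0) y = hammingD (fun _ => γ0) β := hΛsub y hy
            have hsub2 : rho γ0 β ⊆ rho γ0 y := by
              intro δ hδ
              refine ⟨hδ.1, ?_⟩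
              have h3 := hsubδ δ hδ y hy
              have hc : hammingD y δ = hammingD δ y := hammingD_comm _ _
              omega
            have hcards : (rho γ0 y).ncard ≤ (rho γ0 β).ncard := by
              rw [rho_ncard, rho_ncard, hyk]
            have heq := Set.eq_of_subset_of_ncard_le hsub2 hcards (Set.toFinite _)
            exact Set.mem_singleton_iff.mpr (rho_inj_of_eq γ0 heq).symm
          · exact Set.singleton_subset_iff.mpr hβΛ
        rw [← hΛβ]; exact hΛS
    intro p
    obtain ⟨s, ⟨hs, hps⟩, -⟩ := X'.exists_unique_mem p
    have h1 := left_support X' (fib p.1) hs (x := p.2) hps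
    have h2 := right_support X' (fib p.2) hs (x := p.1) hps
    have hsp : s = {p} := by
      apply Set.Subset.antisymm
      · intro q hq
        rw [Set.mem_singleton_iff, Prod.ext_iff]
        exact ⟨h1 q hq, h2 q hq⟩
      · exact Set.singleton_subset_iff.mpr hps
    exact hsp ▸ hs
end
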